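/- arXiv:2103.09095 — 5 statements merged into one kernel-verified Lean document; each statement's English description precedes it below -/
import Mathlib

section
/- Let λ ∈ ℝ with λ ≠ n² for every positive integer n, let h : [0,π] → ℝ be continuous, let h₁, h₂ ∈ ℝ, let f : [0,π] × ℝ → ℝ be continuous and Lipschitz with respect to its second argument (uniformly in the first), and let η₁, η₂ : C([0,π],ℝ) → ℝ be Lipschitz with respect to the supremum norm. Then there exists δ > 0 such that for every ε with |ε| < δ, the boundary value problem v''(t) + λ v(t) = h(t) + ε f(t, v(t)) for t ∈ (0,π), v(0) = h₁ + ε η₁(v), v(π) = h₂ + ε η₂(v), has exactly one twice continuously differentiable solution v on [0,π]. -/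
/-!
Let `C`, `S` be the solutions of `y'' + λ y = 0` with `C 0 = 1, C' 0 = 0` and `S 0 = 0, S' 0 = 1`.
The nonresonance condition `λ ≠ n²` says exactly that `S π ≠ 0`. Then the linear problem
`u'' + λ u = g`, `u 0 = a`, `u π = b` has a solution given by variation of constants, and only one:
a solution of the homogeneous problem is `α C + β S`, and its boundary values force
`α = β S π = 0`. This solution depends affinely, and boundedly in the sup norm, on `(g, a, b)`.
Substituting `g = h + ε f(·, v)`, `a = h₁ + ε η₁ v`, `b = h₂ + ε η₂ v` turns the nonlinear
problem into a fixed point equation on `C([0,π], ℝ)` whose map is Lipschitz with constant `O(|ε|)`,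
so Banach's fixed point theorem applies for small `ε`.
-/

open Set Real intervalIntegral

structure IsFundamentalPair (lam : ℝ) (C S : ℝ → ℝ) : Prop where
  hasDerivAt_C : ∀ t, HasDerivAt C (-lam * S t) t
  hasDerivAt_S : ∀ t, HasDerivAt S (C t) t
  C_zero : C 0 = 1
  S_zero : S 0 = 0

lemma isFundamentalPair_cos_sin {ω : ℝ} (hω : ω ≠ 0) :
    IsFundamentalPair (ω ^ 2) (fun t => cos (ω * t)) (fun t => sin (ω * t) / ω) where
  hasDerivAt_C t := ((hasDerivAt_id' t).const_mul ω).cos.congr_deriv (by field_simp)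
  hasDerivAt_S t :=
    (((hasDerivAt_id' t).const_mul ω).sin.div_const ω).congr_deriv (by field_simp)
  C_zero := by simp
  S_zero := by simp

lemma isFundamentalPair_one_id : IsFundamentalPair 0 (fun _ => 1) id where
  hasDerivAt_C t := by simpa using hasDerivAt_const t (1 : ℝ)
  hasDerivAt_S t := hasDerivAt_id t
  C_zero := rfl
  S_zero := rfl

lemma isFundamentalPair_cosh_sinh {ω : ℝ} (hω : ω ≠ 0) :
    IsFundamentalPair (-ω ^ 2) (fun t => cosh (ω * t)) (fun t => sinh (ω * t) / ω) where
  hasDerivAt_C t := ((hasDerivAt_id' t).const_mul ω).cosh.congr_deriv (by field_simp)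
  hasDerivAt_S t :=
    (((hasDerivAt_id' t).const_mul ω).sinh.div_const ω).congr_deriv (by field_simp)
  C_zero := by simp
  S_zero := by simp

lemma sin_mul_pi_ne_zero {ω : ℝ} (hω : 0 < ω) (hne : ∀ n : ℕ, 0 < n → ω ^ 2 ≠ (n : ℝ) ^ 2) :
    sin (ω * π) ≠ 0 := by
  rw [Ne, sin_eq_zero_iff]
  rintro ⟨n, hn⟩
  have hωn : ω = n := mul_right_cancel₀ pi_ne_zero hn.symm
  lift n to ℕ using by exact_mod_cast (hωn ▸ hω).le
  exact hne n (by exact_mod_cast hωn ▸ hω) (by rw [hωn]; norm_cast)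

lemma exists_isFundamentalPair_of_ne_sq {lam : ℝ}
    (hlam : ∀ n : ℕ, 0 < n → lam ≠ (n : ℝ) ^ 2) :
    ∃ C S, IsFundamentalPair lam C S ∧ S π ≠ 0 := by
  rcases lt_trichotomy lam 0 with hneg | rfl | hpos
  · obtain ⟨ω, hω, rfl⟩ : ∃ ω : ℝ, 0 < ω ∧ -ω ^ 2 = lam :=
      ⟨√(-lam), sqrt_pos.2 (neg_pos.2 hneg), by rw [sq_sqrt (neg_nonneg.2 hneg.le), neg_neg]⟩
    exact ⟨_, _, isFundamentalPair_cosh_sinh hω.ne', by positivity⟩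
  · exact ⟨_, _, isFundamentalPair_one_id, pi_ne_zero⟩
  · obtain ⟨ω, hω, rfl⟩ : ∃ ω : ℝ, 0 < ω ∧ ω ^ 2 = lam :=
      ⟨√lam, sqrt_pos.2 hpos, sq_sqrt hpos.le⟩
    exact ⟨_, _, isFundamentalPair_cos_sin hω.ne',
      div_ne_zero (sin_mul_pi_ne_zero hω hlam) hω.ne'⟩

namespace IsFundamentalPair

variable {lam : ℝ} {C S : ℝ → ℝ}

lemma continuous_C (hCS : IsFundamentalPair lam C S) : Continuous C :=
  continuous_iff_continuousAt.2 fun t => (hCS.hasDerivAt_C t).continuousAt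

lemma continuous_S (hCS : IsFundamentalPair lam C S) : Continuous S :=
  continuous_iff_continuousAt.2 fun t => (hCS.hasDerivAt_S t).continuousAt

lemma sq_add_mul_sq (hCS : IsFundamentalPair lam C S) (t : ℝ) :
    C t ^ 2 + lam * S t ^ 2 = 1 := by
  have hderiv : ∀ t, HasDerivAt (fun t => C t ^ 2 + lam * S t ^ 2) 0 t := fun t =>
    (((hCS.hasDerivAt_C t).pow 2).add (((hCS.hasDerivAt_S t).pow 2).const_mul lam)).congr_deriv
      (by ring)
  rw [is_const_of_deriv_eq_zero (fun t => (hderiv t).differentiableAt)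
    (fun t => (hderiv t).deriv) t 0, hCS.C_zero, hCS.S_zero]
  ring

/-- Since the Wronskian `C² + λ S²` is `1`, the values of `d` and `d'` at any point of the interval
are matched by a combination of `C` and `S`; uniqueness for the first order system
`(d, d')' = (d', -λ d)` does the rest. -/
lemma exists_eqOn_of_hasDerivAt (hCS : IsFundamentalPair lam C S) {a b : ℝ} {d d' : ℝ → ℝ}
    (hd : ∀ t ∈ Ioo a b, HasDerivAt d (d' t) t)
    (hd' : ∀ t ∈ Ioo a b, HasDerivAt d' (-lam * d t) t) :
    ∃ α β : ℝ, EqOn d (fun t => α * C t + β * S t) (Ioo a b) := by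
  rcases (Ioo a b).eq_empty_or_nonempty with hempty | ⟨t₀, ht₀⟩
  · exact ⟨0, 0, by simp [hempty]⟩
  set α := C t₀ * d t₀ - S t₀ * d' t₀
  set β := lam * S t₀ * d t₀ + C t₀ * d' t₀
  let A : ℝ × ℝ →L[ℝ] ℝ × ℝ :=
    (ContinuousLinearMap.snd ℝ ℝ ℝ).prod (-lam • ContinuousLinearMap.fst ℝ ℝ ℝ)
  have hsol : EqOn (fun t => (d t, d' t))
      (fun t => (α * C t + β * S t, α * (-lam * S t) + β * C t)) (Ioo a b) := by
    refine ODE_solution_unique_of_mem_Ioo (v := fun _ => A) (s := fun _ => univ)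
      (fun _ _ => A.lipschitz.lipschitzOnWith) ht₀
      (fun t ht => ⟨(hd t ht).prodMk (hd' t ht), trivial⟩)
      (fun t _ => ⟨?_, trivial⟩) ?_
    · refine ((((hCS.hasDerivAt_C t).const_mul α).add
        ((hCS.hasDerivAt_S t).const_mul β)).prodMk
        ((((hCS.hasDerivAt_S t).const_mul (-lam)).const_mul α).add
          ((hCS.hasDerivAt_C t).const_mul β))).congr_deriv ?_
      simp only [A, ContinuousLinearMap.prod_apply, ContinuousLinearMap.coe_snd',
        FunLike.coe_smul, ContinuousLinearMap.coe_fst', Pi.smul_apply, smul_eq_mul]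
      ext <;> ring
    · have := hCS.sq_add_mul_sq t₀
      ext
      · linear_combination (-d t₀) * this
      · linear_combination (-d' t₀) * this
  exact ⟨α, β, fun t ht => congrArg Prod.fst (hsol ht)⟩

lemma eqOn_zero_of_hasDerivAt (hCS : IsFundamentalPair lam C S) {T : ℝ} (hT : 0 < T)
    (hST : S T ≠ 0) {d d' : ℝ → ℝ}
    (hd : ∀ t ∈ Ioo 0 T, HasDerivAt d (d' t) t)
    (hd' : ∀ t ∈ Ioo 0 T, HasDerivAt d' (-lam * d t) t)
    (hcont : ContinuousOn d (Icc 0 T)) (hd0 : d 0 = 0) (hdT : d T = 0) :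
    EqOn d 0 (Icc 0 T) := by
  obtain ⟨α, β, hαβ⟩ := hCS.exists_eqOn_of_hasDerivAt hd hd'
  have hIcc : EqOn d (fun t => α * C t + β * S t) (Icc 0 T) :=
    hαβ.of_subset_closure hcont
      ((continuous_const.mul hCS.continuous_C).add
        (continuous_const.mul hCS.continuous_S)).continuousOn
      Ioo_subset_Icc_self (closure_Ioo hT.ne).ge
  have hα : α = 0 := by
    simpa [hd0, hCS.C_zero, hCS.S_zero] using (hIcc (left_mem_Icc.2 hT.le)).symm
  have hβ : β = 0 := by
    simpa [hdT, hα, hST] using (hIcc (right_mem_Icc.2 hT.le)).symm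
  intro t ht
  simp [hIcc ht, hα, hβ]

end IsFundamentalPair

lemma contDiff_two_of_hasDerivAt {u u' u'' : ℝ → ℝ} (hu : ∀ t, HasDerivAt u (u' t) t)
    (hu' : ∀ t, HasDerivAt u' (u'' t) t) (hu'' : Continuous u'') : ContDiff ℝ 2 u := by
  rw [show (2 : WithTop ℕ∞) = 1 + 1 from rfl, contDiff_succ_iff_deriv,
    show deriv u = u' from funext fun t => (hu t).deriv, contDiff_one_iff_deriv,
    show deriv u' = u'' from funext fun t => (hu' t).deriv]
  exact ⟨fun t => (hu t).differentiableAt, by simp, fun t => (hu' t).differentiableAt, hu''⟩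

lemma hasDerivAt_deriv_of_contDiffOn {w : ℝ → ℝ} {U : Set ℝ} (hw : ContDiffOn ℝ 2 w U)
    (hU : IsOpen U) {t : ℝ} (ht : t ∈ U) :
    HasDerivAt w (deriv w t) t ∧ HasDerivAt (deriv w) (deriv (deriv w) t) t :=
  ⟨((hw.differentiableOn (by norm_num)).differentiableAt (hU.mem_nhds ht)).hasDerivAt,
    (((hw.deriv_of_isOpen hU (by norm_num : (1 : WithTop ℕ∞) + 1 ≤ 2)).differentiableOn
      one_ne_zero).differentiableAt (hU.mem_nhds ht)).hasDerivAt⟩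

/-- `∫₀ᵗ S(t - s) g(s) ds`, expanded by the addition formula `S(t - s) = S t C s - C t S s` so
that it can be differentiated in `t`. -/
noncomputable def duhamel (C S g : ℝ → ℝ) (t : ℝ) : ℝ :=
  S t * (∫ s in 0..t, C s * g s) - C t * ∫ s in 0..t, S s * g s

noncomputable def bvpSolution (C S g : ℝ → ℝ) (T a b t : ℝ) : ℝ :=
  a * C t + (b - a * C T - duhamel C S g T) / S T * S t + duhamel C S g t

lemma duhamel_zero (C S g : ℝ → ℝ) : duhamel C S g 0 = 0 := by
  simp [duhamel]

lemma abs_duhamel_le {C S g : ℝ → ℝ} {T B N t : ℝ} (hC : ∀ s ∈ Icc 0 T, |C s| ≤ B)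
    (hS : ∀ s ∈ Icc 0 T, |S s| ≤ B) (hg : ∀ s ∈ Icc 0 T, |g s| ≤ N) (ht : t ∈ Icc 0 T) :
    |duhamel C S g t| ≤ 2 * B * B * N * T := by
  have hB : 0 ≤ B := (abs_nonneg _).trans (hC t ht)
  have hN : 0 ≤ N := (abs_nonneg _).trans (hg t ht)
  have hint : ∀ φ : ℝ → ℝ, (∀ s ∈ Icc 0 T, |φ s| ≤ B) →
      |∫ s in 0..t, φ s * g s| ≤ B * N * T := by
    intro φ hφ
    have hle : ∀ s ∈ uIoc 0 t, ‖φ s * g s‖ ≤ B * N := by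
      intro s hs
      rw [uIoc_of_le ht.1] at hs
      have hsI : s ∈ Icc 0 T := ⟨hs.1.le, hs.2.trans ht.2⟩
      rw [Real.norm_eq_abs, abs_mul]
      exact mul_le_mul (hφ s hsI) (hg s hsI) (abs_nonneg _) hB
    calc |∫ s in 0..t, φ s * g s| ≤ B * N * |t - 0| := norm_integral_le_of_norm_le_const hle
      _ ≤ B * N * T := by rw [sub_zero, abs_of_nonneg ht.1]; gcongr; exact ht.2
  calc |duhamel C S g t|
      ≤ |S t| * |∫ s in 0..t, C s * g s| + |C t| * |∫ s in 0..t, S s * g s| := by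
        rw [duhamel, ← abs_mul, ← abs_mul]; exact abs_sub _ _
    _ ≤ B * (B * N * T) + B * (B * N * T) := by
        gcongr
        exacts [hS t ht, hint C hC, hC t ht, hint S hS]
    _ = 2 * B * B * N * T := by ring

lemma bvpSolution_self {C S g : ℝ → ℝ} {T : ℝ} (hST : S T ≠ 0) (a b : ℝ) :
    bvpSolution C S g T a b T = b := by
  rw [bvpSolution]
  field_simp
  ring

namespace IsFundamentalPair

variable {lam : ℝ} {C S g : ℝ → ℝ}

lemma exists_hasDerivAt_duhamel (hCS : IsFundamentalPair lam C S) (hg : Continuous g) :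
    ∃ u', (∀ t, HasDerivAt (duhamel C S g) (u' t) t) ∧
      ∀ t, HasDerivAt u' (-lam * duhamel C S g t + g t) t := by
  have hIC : ∀ t, HasDerivAt (fun t => ∫ s in 0..t, C s * g s) (C t * g t) t := fun t =>
    ((hCS.continuous_C.mul hg).integral_hasStrictDerivAt 0 t).hasDerivAt
  have hIS : ∀ t, HasDerivAt (fun t => ∫ s in 0..t, S s * g s) (S t * g t) t := fun t =>
    ((hCS.continuous_S.mul hg).integral_hasStrictDerivAt 0 t).hasDerivAt
  refine ⟨fun t => C t * (∫ s in 0..t, C s * g s) + lam * S t * ∫ s in 0..t, S s * g s,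
    fun t => (((hCS.hasDerivAt_S t).mul (hIC t)).sub
      ((hCS.hasDerivAt_C t).mul (hIS t))).congr_deriv (by ring), fun t => ?_⟩
  refine (((hCS.hasDerivAt_C t).mul (hIC t)).add
    (((hCS.hasDerivAt_S t).const_mul lam).mul (hIS t))).congr_deriv ?_
  rw [duhamel]
  linear_combination g t * hCS.sq_add_mul_sq t

lemma exists_hasDerivAt_bvpSolution (hCS : IsFundamentalPair lam C S) (hg : Continuous g)
    (T a b : ℝ) :
    ∃ u', (∀ t, HasDerivAt (bvpSolution C S g T a b) (u' t) t) ∧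
      ∀ t, HasDerivAt u' (-lam * bvpSolution C S g T a b t + g t) t := by
  obtain ⟨v', hv, hv'⟩ := hCS.exists_hasDerivAt_duhamel hg
  set β := (b - a * C T - duhamel C S g T) / S T
  refine ⟨fun t => a * (-lam * S t) + β * C t + v' t, fun t => ?_, fun t => ?_⟩
  · exact (((hCS.hasDerivAt_C t).const_mul a).add ((hCS.hasDerivAt_S t).const_mul β)).add (hv t)
  · refine ((((hCS.hasDerivAt_S t).const_mul (-lam)).const_mul a).add
      ((hCS.hasDerivAt_C t).const_mul β)).add (hv' t) |>.congr_deriv ?_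
    rw [bvpSolution]
    ring

lemma contDiff_bvpSolution (hCS : IsFundamentalPair lam C S) (hg : Continuous g) (T a b : ℝ) :
    ContDiff ℝ 2 (bvpSolution C S g T a b) := by
  obtain ⟨u', hu, hu'⟩ := hCS.exists_hasDerivAt_bvpSolution hg T a b
  have hcont : Continuous (bvpSolution C S g T a b) :=
    continuous_iff_continuousAt.2 fun t => (hu t).continuousAt
  exact contDiff_two_of_hasDerivAt hu hu' ((continuous_const.mul hcont).add hg)

lemma deriv_deriv_bvpSolution (hCS : IsFundamentalPair lam C S) (hg : Continuous g)
    (T a b t : ℝ) :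
    deriv (deriv (bvpSolution C S g T a b)) t + lam * bvpSolution C S g T a b t = g t := by
  obtain ⟨u', hu, hu'⟩ := hCS.exists_hasDerivAt_bvpSolution hg T a b
  rw [show deriv (bvpSolution C S g T a b) = u' from funext fun t => (hu t).deriv,
    (hu' t).deriv]
  ring

lemma bvpSolution_zero (hCS : IsFundamentalPair lam C S) (T a b : ℝ) :
    bvpSolution C S g T a b 0 = a := by
  simp [bvpSolution, hCS.C_zero, hCS.S_zero, duhamel_zero]

lemma eqOn_bvpSolution (hCS : IsFundamentalPair lam C S) {T : ℝ} (hT : 0 < T) (hST : S T ≠ 0)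
    (hg : Continuous g) {w : ℝ → ℝ} {a b : ℝ} (hw : ContDiffOn ℝ 2 w (Icc 0 T))
    (hode : ∀ t ∈ Ioo 0 T, deriv (deriv w) t + lam * w t = g t) (hw0 : w 0 = a)
    (hwT : w T = b) :
    EqOn w (bvpSolution C S g T a b) (Icc 0 T) := by
  obtain ⟨u', hu, hu'⟩ := hCS.exists_hasDerivAt_bvpSolution hg T a b
  have hw' := fun t (ht : t ∈ Ioo 0 T) =>
    hasDerivAt_deriv_of_contDiffOn (hw.mono Ioo_subset_Icc_self) isOpen_Ioo ht
  have hzero := hCS.eqOn_zero_of_hasDerivAt hT hST (d := w - bvpSolution C S g T a b)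
    (d' := deriv w - u') (fun t ht => (hw' t ht).1.sub (hu t))
    (fun t ht => ((hw' t ht).2.sub (hu' t)).congr_deriv (by
      simp only [Pi.sub_apply]; linear_combination hode t ht))
    (hw.continuousOn.sub (hCS.contDiff_bvpSolution hg T a b).continuous.continuousOn)
    (by simp [hw0, hCS.bvpSolution_zero]) (by simp [hwT, bvpSolution_self hST])
  exact fun t ht => sub_eq_zero.1 (hzero ht)

lemma duhamel_sub (hCS : IsFundamentalPair lam C S) {g' : ℝ → ℝ} (hg : Continuous g)
    (hg' : Continuous g') (t : ℝ) :
    duhamel C S (g - g') t = duhamel C S g t - duhamel C S g' t := by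
  have hint : ∀ φ ψ : ℝ → ℝ, Continuous φ → Continuous ψ →
      IntervalIntegrable (fun s => φ s * ψ s) MeasureTheory.volume 0 t :=
    fun _ _ hφ hψ => (hφ.mul hψ).intervalIntegrable _ _
  simp only [duhamel, Pi.sub_apply, mul_sub]
  rw [integral_sub (hint _ _ hCS.continuous_C hg) (hint _ _ hCS.continuous_C hg'),
    integral_sub (hint _ _ hCS.continuous_S hg) (hint _ _ hCS.continuous_S hg')]
  ring

lemma bvpSolution_sub (hCS : IsFundamentalPair lam C S) {g' : ℝ → ℝ} (hg : Continuous g)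
    (hg' : Continuous g') (T a b a' b' t : ℝ) :
    bvpSolution C S g T a b t - bvpSolution C S g' T a' b' t =
      bvpSolution C S (g - g') T (a - a') (b - b') t := by
  simp only [bvpSolution, hCS.duhamel_sub hg hg']
  ring

lemma exists_abs_bvpSolution_le (hCS : IsFundamentalPair lam C S) {T : ℝ} (hT : 0 < T) :
    ∃ M, 0 ≤ M ∧ ∀ (g : ℝ → ℝ) (a b N : ℝ), (∀ s ∈ Icc 0 T, |g s| ≤ N) →
      ∀ t ∈ Icc 0 T, |bvpSolution C S g T a b t| ≤ M * (|a| + |b| + N) := by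
  obtain ⟨BC, hBC⟩ := isCompact_Icc.exists_bound_of_continuousOn hCS.continuous_C.continuousOn
  obtain ⟨BS, hBS⟩ := isCompact_Icc.exists_bound_of_continuousOn hCS.continuous_S.continuousOn
  set B := max BC BS
  have hC : ∀ s ∈ Icc 0 T, |C s| ≤ B := fun s hs => (hBC s hs).trans (le_max_left _ _)
  have hS : ∀ s ∈ Icc 0 T, |S s| ≤ B := fun s hs => (hBS s hs).trans (le_max_right _ _)
  have hTmem : T ∈ Icc 0 T := right_mem_Icc.2 hT.le
  have hB : 0 ≤ B := (abs_nonneg _).trans (hC T hTmem)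
  set q := |S T|⁻¹
  set K := 2 * B * B * T
  refine ⟨B + q * B * (1 + B + K) + K, by positivity, fun g a b N hg t ht => ?_⟩
  have hN : 0 ≤ N := (abs_nonneg _).trans (hg t ht)
  have hβ : |(b - a * C T - duhamel C S g T) / S T| ≤ q * (|b| + |a| * B + K * N) := by
    rw [abs_div, div_eq_inv_mul]
    gcongr
    calc |b - a * C T - duhamel C S g T| ≤ |b| + |a * C T| + |duhamel C S g T| :=
          (abs_sub _ _).trans (add_le_add_left (abs_sub _ _) _)
      _ ≤ |b| + |a| * B + K * N := by
        rw [abs_mul]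
        gcongr
        · exact hC T hTmem
        · linarith [abs_duhamel_le hC hS hg hTmem]
  calc |bvpSolution C S g T a b t|
      ≤ |a * C t| + |(b - a * C T - duhamel C S g T) / S T * S t| + |duhamel C S g t| :=
        abs_add_three _ _ _
    _ ≤ |a| * B + q * (|b| + |a| * B + K * N) * B + K * N := by
        rw [abs_mul a, abs_mul _ (S t)]
        gcongr
        exacts [hC t ht, hS t ht, by linarith [abs_duhamel_le hC hS hg ht]]
    _ ≤ (B + q * B * (1 + B + K) + K) * (|a| + |b| + N) := by
        nlinarith [mul_nonneg (abs_nonneg a) (by positivity : 0 ≤ q * B * (1 + K) + K),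
          mul_nonneg (abs_nonneg b) (by positivity : 0 ≤ B + q * B * (B + K) + K),
          mul_nonneg hN (by positivity : 0 ≤ B + q * B * (1 + B))]

end IsFundamentalPair

def IsBVPSolution (lam T : ℝ) (G : ℝ → ℝ → ℝ) (α β : C(Icc (0 : ℝ) T, ℝ) → ℝ) (v : ℝ → ℝ)
    (vc : C(Icc (0 : ℝ) T, ℝ)) : Prop :=
  ContDiffOn ℝ 2 v (Icc 0 T) ∧ (∀ t ∈ Ioo 0 T, deriv (deriv v) t + lam * v t = G t (v t)) ∧
    v 0 = α vc ∧ v T = β vc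

section Forcing

variable {T : ℝ} (hT : 0 ≤ T) {G : ℝ → ℝ → ℝ}

/-- Extended constantly outside `[0, T]`, so that its Duhamel integrals are differentiable
everywhere. -/
noncomputable def forcing (G : ℝ → ℝ → ℝ) (u : C(Icc (0 : ℝ) T, ℝ)) : ℝ → ℝ :=
  IccExtend hT fun x => G x (u x)

lemma continuous_forcing (hG : ContinuousOn (fun p : ℝ × ℝ => G p.1 p.2) (Icc 0 T ×ˢ univ))
    (u : C(Icc (0 : ℝ) T, ℝ)) : Continuous (forcing hT G u) :=
  Continuous.Icc_extend' <|
    hG.comp_continuous (continuous_subtype_val.prodMk u.continuous) fun x => ⟨x.2, trivial⟩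

lemma forcing_of_mem (u : C(Icc (0 : ℝ) T, ℝ)) {t : ℝ} (ht : t ∈ Icc 0 T) :
    forcing hT G u t = G t (u ⟨t, ht⟩) :=
  IccExtend_of_mem hT _ ht

lemma abs_forcing_sub_le {K : NNReal} (hG : ∀ t ∈ Icc 0 T, LipschitzWith K (G t))
    (u u' : C(Icc (0 : ℝ) T, ℝ)) (s : ℝ) :
    |forcing hT G u s - forcing hT G u' s| ≤ K * dist u u' := by
  set p := projIcc 0 T hT s
  calc |forcing hT G u s - forcing hT G u' s| = dist (G p (u p)) (G p (u' p)) :=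
        (Real.dist_eq _ _).symm
    _ ≤ K * dist (u p) (u' p) := (hG p p.2).dist_le_mul _ _
    _ ≤ K * dist u u' := by gcongr; exact u.dist_apply_le_dist p

end Forcing

noncomputable def bvpOperator (C S : ℝ → ℝ) {T : ℝ} (hT : 0 ≤ T) (G : ℝ → ℝ → ℝ)
    (α β : C(Icc (0 : ℝ) T, ℝ) → ℝ) (u : C(Icc (0 : ℝ) T, ℝ)) : ℝ → ℝ :=
  bvpSolution C S (forcing hT G u) T (α u) (β u)

namespace IsFundamentalPair

variable {lam T : ℝ} {C S : ℝ → ℝ} {G : ℝ → ℝ → ℝ} {α β : C(Icc (0 : ℝ) T, ℝ) → ℝ}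

lemma isBVPSolution_bvpOperator (hCS : IsFundamentalPair lam C S) (hT : 0 ≤ T)
    (hG : ContinuousOn (fun p : ℝ × ℝ => G p.1 p.2) (Icc 0 T ×ˢ univ)) (hST : S T ≠ 0)
    {u : C(Icc (0 : ℝ) T, ℝ)} (hu : ∀ t : Icc (0 : ℝ) T, u t = bvpOperator C S hT G α β u t) :
    IsBVPSolution lam T G α β (bvpOperator C S hT G α β u) u := by
  have hg := continuous_forcing hT hG u
  refine ⟨(hCS.contDiff_bvpSolution hg T _ _).contDiffOn, fun t ht => ?_,
    hCS.bvpSolution_zero T _ _, bvpSolution_self hST _ _⟩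
  rw [bvpOperator, hCS.deriv_deriv_bvpSolution hg,
    forcing_of_mem hT u (Ioo_subset_Icc_self ht), hu]
  rfl

lemma eqOn_bvpOperator (hCS : IsFundamentalPair lam C S) (hT : 0 < T)
    (hG : ContinuousOn (fun p : ℝ × ℝ => G p.1 p.2) (Icc 0 T ×ˢ univ)) (hST : S T ≠ 0)
    {w : ℝ → ℝ} {wc : C(Icc (0 : ℝ) T, ℝ)} (hw : ∀ t : Icc (0 : ℝ) T, wc t = w t)
    (hsol : IsBVPSolution lam T G α β w wc) :
    EqOn w (bvpOperator C S hT.le G α β wc) (Icc 0 T) := by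
  obtain ⟨hw2, hode, hw0, hwT⟩ := hsol
  refine hCS.eqOn_bvpSolution hT hST (continuous_forcing hT.le hG wc) hw2 (fun t ht => ?_)
    hw0 hwT
  rw [hode t ht, forcing_of_mem hT.le wc (Ioo_subset_Icc_self ht), hw]

lemma abs_bvpOperator_sub_le (hCS : IsFundamentalPair lam C S) (hT : 0 ≤ T)
    (hG : ContinuousOn (fun p : ℝ × ℝ => G p.1 p.2) (Icc 0 T ×ˢ univ)) {M : ℝ} (hM0 : 0 ≤ M)
    (hM : ∀ (g : ℝ → ℝ) (a b N : ℝ), (∀ s ∈ Icc 0 T, |g s| ≤ N) →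
      ∀ t ∈ Icc 0 T, |bvpSolution C S g T a b t| ≤ M * (|a| + |b| + N))
    {KG Kα Kβ : NNReal} (hGL : ∀ t ∈ Icc 0 T, LipschitzWith KG (G t))
    (hα : LipschitzWith Kα α) (hβ : LipschitzWith Kβ β) (u u' : C(Icc (0 : ℝ) T, ℝ)) {t : ℝ}
    (ht : t ∈ Icc 0 T) :
    |bvpOperator C S hT G α β u t - bvpOperator C S hT G α β u' t| ≤
      M * (Kα + Kβ + KG) * dist u u' := by
  rw [bvpOperator, bvpOperator, hCS.bvpSolution_sub (continuous_forcing hT hG u)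
    (continuous_forcing hT hG u')]
  calc _ ≤ M * (|α u - α u'| + |β u - β u'| + KG * dist u u') :=
        hM _ _ _ _ (fun s _ => abs_forcing_sub_le hT hGL u u' s) t ht
    _ ≤ M * (Kα * dist u u' + Kβ * dist u u' + KG * dist u u') := by
        gcongr
        · exact Real.dist_eq _ _ ▸ hα.dist_le_mul u u'
        · exact Real.dist_eq _ _ ▸ hβ.dist_le_mul u u'
    _ = M * (Kα + Kβ + KG) * dist u u' := by ring

theorem exists_pos_existsUnique_isBVPSolution (hCS : IsFundamentalPair lam C S) (hT : 0 < T)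
    (hST : S T ≠ 0) :
    ∃ δ > 0, ∀ (G : ℝ → ℝ → ℝ) (α β : C(Icc (0 : ℝ) T, ℝ) → ℝ) (KG Kα Kβ : NNReal),
      ContinuousOn (fun p : ℝ × ℝ => G p.1 p.2) (Icc 0 T ×ˢ univ) →
      (∀ t ∈ Icc 0 T, LipschitzWith KG (G t)) → LipschitzWith Kα α → LipschitzWith Kβ β →
      (Kα + Kβ + KG : ℝ) < δ →
      ∃ v vc, (∀ t : Icc (0 : ℝ) T, vc t = v t) ∧ IsBVPSolution lam T G α β v vc ∧
        ∀ w wc, (∀ t : Icc (0 : ℝ) T, wc t = w t) → IsBVPSolution lam T G α β w wc →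
          EqOn w v (Icc 0 T) := by
  obtain ⟨M, hM0, hM⟩ := hCS.exists_abs_bvpSolution_le hT
  refine ⟨1 / (M + 1), by positivity, fun G α β KG Kα Kβ hG hGL hα hβ hK => ?_⟩
  set Φ : C(Icc (0 : ℝ) T, ℝ) → C(Icc (0 : ℝ) T, ℝ) := fun u =>
    ⟨fun t => bvpOperator C S hT.le G α β u t,
      (hCS.contDiff_bvpSolution (continuous_forcing hT.le hG u) T _ _).continuous.comp
        continuous_subtype_val⟩
  have hq : 0 ≤ M * (Kα + Kβ + KG) := by positivity
  have hΦ : ContractingWith (M * (Kα + Kβ + KG)).toNNReal Φ := by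
    refine ⟨?_, LipschitzWith.of_dist_le_mul fun u u' => ?_⟩
    · rw [← NNReal.coe_lt_coe, Real.coe_toNNReal _ hq, NNReal.coe_one]
      calc M * (Kα + Kβ + KG) ≤ (M + 1) * (Kα + Kβ + KG) := by gcongr; linarith
        _ < (M + 1) * (1 / (M + 1)) := by gcongr
        _ = 1 := by field_simp
    · rw [Real.coe_toNNReal _ hq, ContinuousMap.dist_le (by positivity)]
      exact fun t => hCS.abs_bvpOperator_sub_le hT.le hG hM0 hM hGL hα hβ u u' t.2
  set vc := ContractingWith.fixedPoint Φ hΦ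
  have hvc : ∀ t, vc t = bvpOperator C S hT.le G α β vc t := fun t =>
    (DFunLike.congr_fun hΦ.fixedPoint_isFixedPt t).symm
  refine ⟨_, vc, hvc, hCS.isBVPSolution_bvpOperator hT.le hG hST hvc, fun w wc hw hsol => ?_⟩
  have hwc := hCS.eqOn_bvpOperator hT hG hST hw hsol
  obtain rfl : wc = vc := hΦ.fixedPoint_unique <| ContinuousMap.ext fun t => by
    rw [hw, hwc t.2]
    rfl
  exact hwc

end IsFundamentalPair

lemma LipschitzWith.const_add_const_mul {X : Type*} [PseudoMetricSpace X] {K : NNReal}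
    {φ : X → ℝ} (hφ : LipschitzWith K φ) (a ε : ℝ) :
    LipschitzWith (‖ε‖₊ * K) fun x => a + ε * φ x :=
  LipschitzWith.of_dist_le_mul fun x y => by
    rw [dist_add_left, Real.dist_eq, ← mul_sub, abs_mul, NNReal.coe_mul, coe_nnnorm,
      Real.norm_eq_abs, mul_assoc, ← Real.dist_eq]
    gcongr
    exact hφ.dist_le_mul x y

/-- For `λ` not an eigenvalue, continuous `h`, `f` continuous and
Lipschitz in its second argument (uniformly in the first), and `η₁, η₂` Lipschitz
functionals on `C([0,π],ℝ)`, there is `δ > 0` such that for `|ε| < δ` the boundary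
value problem `v'' + λ v = h + ε f(·, v)`, `v(0) = h₁ + ε η₁(v)`, `v(π) = h₂ + ε η₂(v)`
has exactly one twice continuously differentiable solution. -/
theorem nonresonant_weakly_nonlinear_bvp_lipschitz
    (lam : ℝ) (hlam : ∀ n : ℕ, 0 < n → lam ≠ (n : ℝ) ^ 2)
    (h : ℝ → ℝ) (hh : ContinuousOn h (Icc 0 π)) (h₁ h₂ : ℝ)
    (f : ℝ → ℝ → ℝ)
    (hf_cont : ContinuousOn (fun p : ℝ × ℝ => f p.1 p.2) (Icc (0 : ℝ) π ×ˢ (univ : Set ℝ)))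
    (hf_lip : ∃ Kf : NNReal, ∀ t ∈ Icc (0 : ℝ) π, LipschitzWith Kf (f t))
    (η₁ η₂ : C(Icc (0 : ℝ) π, ℝ) → ℝ)
    (hη₁ : ∃ K₁ : NNReal, LipschitzWith K₁ η₁)
    (hη₂ : ∃ K₂ : NNReal, LipschitzWith K₂ η₂) :
    ∃ δ > 0, ∀ ε : ℝ, |ε| < δ →
      ∃ v : ℝ → ℝ, ∃ vc : C(Icc (0 : ℝ) π, ℝ),
        -- `vc` is `v` regarded as an element of `C([0,π],ℝ)`
        (∀ t : Icc (0 : ℝ) π, vc t = v t) ∧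
        -- `v` solves the boundary value problem
        (ContDiffOn ℝ 2 v (Icc 0 π) ∧
          (∀ t ∈ Ioo (0 : ℝ) π, deriv (deriv v) t + lam * v t = h t + ε * f t (v t)) ∧
          v 0 = h₁ + ε * η₁ vc ∧ v π = h₂ + ε * η₂ vc) ∧
        -- and it is the unique solution
        (∀ w : ℝ → ℝ, ∀ wc : C(Icc (0 : ℝ) π, ℝ),
          (∀ t : Icc (0 : ℝ) π, wc t = w t) →
          ContDiffOn ℝ 2 w (Icc 0 π) →
          (∀ t ∈ Ioo (0 : ℝ) π, deriv (deriv w) t + lam * w t = h t + ε * f t (w t)) →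
          w 0 = h₁ + ε * η₁ wc → w π = h₂ + ε * η₂ wc →
          EqOn w v (Icc 0 π)) := by
  obtain ⟨Kf, hKf⟩ := hf_lip
  obtain ⟨K₁, hK₁⟩ := hη₁
  obtain ⟨K₂, hK₂⟩ := hη₂
  obtain ⟨C, S, hCS, hSπ⟩ := exists_isFundamentalPair_of_ne_sq hlam
  obtain ⟨δ, hδ, hsolve⟩ := hCS.exists_pos_existsUnique_isBVPSolution pi_pos hSπ
  refine ⟨δ / (K₁ + K₂ + Kf + 1), by positivity, fun ε hε => ?_⟩
  have hG : ContinuousOn (fun p : ℝ × ℝ => h p.1 + ε * f p.1 p.2) (Icc 0 π ×ˢ univ) :=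
    (hh.comp continuousOn_fst fun _ hp => hp.1).add (continuousOn_const.mul hf_cont)
  have hsmall : ((‖ε‖₊ * K₁ : NNReal) + (‖ε‖₊ * K₂ : NNReal) + (‖ε‖₊ * Kf : NNReal) : ℝ) < δ := by
    have := (lt_div_iff₀ (by positivity)).1 hε
    push_cast
    rw [Real.norm_eq_abs]
    nlinarith [abs_nonneg ε]
  obtain ⟨v, vc, hvc, hv, huniq⟩ := hsolve _ _ _ _ _ _ hG
    (fun t ht => (hKf t ht).const_add_const_mul (h t) ε) (hK₁.const_add_const_mul h₁ ε)
    (hK₂.const_add_const_mul h₂ ε) hsmall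
  exact ⟨v, vc, hvc, hv, fun w wc hw hw2 hode hw0 hwπ => huniq w wc hw ⟨hw2, hode, hw0, hwπ⟩⟩
end

section
/- Let λ ∈ ℝ with λ ≠ n² for every positive integer n, let h : [0,π] → ℝ be continuous, and let h₁, h₂ ∈ ℝ. Then there exists exactly one twice continuously differentiable function v : [0,π] → ℝ satisfying v''(t) + λ v(t) = h(t) for t ∈ (0,π), v(0) = h₁, and v(π) = h₂. -/
/-!
Let `C, S` solve `u'' + λu = 0` with `C(0) = 1, C'(0) = 0, S(0) = 0, S'(0) = 1`. Since the
equation has no first-order term, the Wronskian `u v' - u' v` of any two of its solutions is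
constant; in particular `C S' - C' S = 1`. Variation of constants gives the particular solution
`S(t) ∫₀ᵗ C h - C(t) ∫₀ᵗ S h` vanishing at `0`, and adding `h₁ C + β S` fits both boundary
values as soon as `S(π) ≠ 0`. Conversely the difference `u` of two solutions has constant
Wronskians with `C` and with `S`, hence is a combination of `C` and `S`, and the boundary
conditions force `u = 0`, again because `S(π) ≠ 0`. Finally `S(π)` is `π`, `sinh(ωπ)/ω` or
`sin(ωπ)/ω` with `ω = √|λ|`, which vanishes only when `λ = n²`.
-/

open Set Real

theorem ContinuousOn.exists_continuous_eqOn_Icc {α β : Type*} [LinearOrder α]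
    [TopologicalSpace α] [OrderTopology α] [TopologicalSpace β] {a b : α} {f : α → β}
    (hf : ContinuousOn f (Icc a b)) (hab : a ≤ b) :
    ∃ g : α → β, Continuous g ∧ EqOn g f (Icc a b) :=
  ⟨IccExtend hab ((Icc a b).domRestrict f),
    (continuousOn_iff_continuous_domRestrict.1 hf).Icc_extend',
    fun _ hx => IccExtend_of_mem hab _ hx⟩

theorem ContDiffAt.hasDerivAt_deriv {𝕜 E : Type*} [NontriviallyNormedField 𝕜]
    [NormedAddCommGroup E] [NormedSpace 𝕜 E] {f : 𝕜 → E} {t : 𝕜} (hf : ContDiffAt 𝕜 2 f t) :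
    HasDerivAt (deriv f) (deriv (deriv f) t) t :=
  ((hf.derivWithin (m := 1) (by norm_num)).differentiableAt one_ne_zero).hasDerivAt

theorem contDiff_two_of_hasDerivAt_s3 {f f' f'' : ℝ → ℝ} (hf : ∀ t, HasDerivAt f (f' t) t)
    (hf' : ∀ t, HasDerivAt f' (f'' t) t) (hf'' : Continuous f'') : ContDiff ℝ 2 f := by
  have hderiv : deriv f = f' := funext fun t => (hf t).deriv
  rw [show (2 : WithTop ℕ∞) = 1 + 1 from rfl, contDiff_succ_iff_deriv, hderiv,
    contDiff_one_iff_deriv, funext fun t => (hf' t).deriv]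
  exact ⟨fun t => (hf t).differentiableAt, by simp, fun t => (hf' t).differentiableAt, hf''⟩

theorem exists_wronskian_eq_const {lam : ℝ} {s : Set ℝ} {u u' v v' : ℝ → ℝ} (hs : IsOpen s)
    (hs' : IsPreconnected s)
    (hu : ∀ t ∈ s, HasDerivAt u (u' t) t) (hu' : ∀ t ∈ s, HasDerivAt u' (-lam * u t) t)
    (hv : ∀ t ∈ s, HasDerivAt v (v' t) t) (hv' : ∀ t ∈ s, HasDerivAt v' (-lam * v t) t) :
    ∃ c, ∀ t ∈ s, u t * v' t - u' t * v t = c := by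
  have hW : ∀ t ∈ s, HasDerivAt (fun t => u t * v' t - u' t * v t) 0 t := fun t ht =>
    (((hu t ht).mul (hv' t ht)).sub ((hu' t ht).mul (hv t ht))).congr_deriv (by ring)
  exact hs.exists_is_const_of_deriv_eq_zero hs'
    (fun t ht => (hW t ht).differentiableAt.differentiableWithinAt) fun t ht => (hW t ht).deriv

theorem hasDerivAt_integral_mul {f g : ℝ → ℝ} (hf : Continuous f) (hg : Continuous g) (t : ℝ) :
    HasDerivAt (fun t => ∫ s in 0..t, f s * g s) (f t * g t) t :=
  ((hf.mul hg).integral_hasStrictDerivAt 0 t).hasDerivAt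

structure FundamentalSystem (lam : ℝ) where
  C : ℝ → ℝ
  S : ℝ → ℝ
  C' : ℝ → ℝ
  S' : ℝ → ℝ
  hasDerivAt_C : ∀ t, HasDerivAt C (C' t) t
  hasDerivAt_C' : ∀ t, HasDerivAt C' (-lam * C t) t
  hasDerivAt_S : ∀ t, HasDerivAt S (S' t) t
  hasDerivAt_S' : ∀ t, HasDerivAt S' (-lam * S t) t
  C_zero : C 0 = 1
  C'_zero : C' 0 = 0
  S_zero : S 0 = 0
  S'_zero : S' 0 = 1

namespace FundamentalSystem

variable {lam : ℝ} (F : FundamentalSystem lam)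

@[fun_prop]
theorem continuous_C : Continuous F.C :=
  continuous_iff_continuousAt.2 fun t => (F.hasDerivAt_C t).continuousAt

@[fun_prop]
theorem continuous_S : Continuous F.S :=
  continuous_iff_continuousAt.2 fun t => (F.hasDerivAt_S t).continuousAt

theorem wronskian_eq_one (t : ℝ) : F.C t * F.S' t - F.C' t * F.S t = 1 := by
  obtain ⟨c, hc⟩ := exists_wronskian_eq_const isOpen_univ isPreconnected_univ
    (fun t _ => F.hasDerivAt_C t) (fun t _ => F.hasDerivAt_C' t)
    (fun t _ => F.hasDerivAt_S t) (fun t _ => F.hasDerivAt_S' t)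
  have h0 := hc 0 trivial
  rw [F.C_zero, F.S'_zero, F.C'_zero, F.S_zero] at h0
  rw [hc t trivial, ← h0]
  ring

theorem exists_eqOn_combination {s : Set ℝ} (hs : IsOpen s) (hs' : IsPreconnected s) {u u' : ℝ → ℝ}
    (hu : ∀ t ∈ s, HasDerivAt u (u' t) t) (hu' : ∀ t ∈ s, HasDerivAt u' (-lam * u t) t) :
    ∃ a b : ℝ, EqOn u (fun t => a * F.C t + b * F.S t) s := by
  obtain ⟨a, ha⟩ := exists_wronskian_eq_const hs hs' hu hu'
    (fun t _ => F.hasDerivAt_C t) (fun t _ => F.hasDerivAt_C' t)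
  obtain ⟨b, hb⟩ := exists_wronskian_eq_const hs hs' hu hu'
    (fun t _ => F.hasDerivAt_S t) (fun t _ => F.hasDerivAt_S' t)
  refine ⟨b, -a, fun t ht => ?_⟩
  linear_combination F.C t * hb t ht - F.S t * ha t ht - u t * F.wronskian_eq_one t

theorem eqOn_zero_of_boundary {b : ℝ} (hb : 0 < b) (hSb : F.S b ≠ 0) {u u' : ℝ → ℝ}
    (hu_cont : ContinuousOn u (Icc 0 b)) (hu : ∀ t ∈ Ioo 0 b, HasDerivAt u (u' t) t)
    (hu' : ∀ t ∈ Ioo 0 b, HasDerivAt u' (-lam * u t) t) (hu0 : u 0 = 0) (hub : u b = 0) :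
    EqOn u 0 (Icc 0 b) := by
  obtain ⟨α, β, hIoo⟩ := F.exists_eqOn_combination isOpen_Ioo isPreconnected_Ioo hu hu'
  have hIcc : EqOn u (fun t => α * F.C t + β * F.S t) (Icc 0 b) :=
    hIoo.of_subset_closure hu_cont (by fun_prop)
      Ioo_subset_Icc_self (closure_Ioo hb.ne).ge
  have hα : α = 0 := by
    simpa [hu0, F.C_zero, F.S_zero, eq_comm] using hIcc (left_mem_Icc.2 hb.le)
  have hβ : β = 0 := by
    simpa [hub, hα, hSb] using hIcc (right_mem_Icc.2 hb.le)
  intro t ht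
  simp [hIcc ht, hα, hβ]

/-- The variation-of-constants solution of `u'' + lam u = g` with `u(0) = u'(0) = 0`. -/
noncomputable def duhamel (g : ℝ → ℝ) (t : ℝ) : ℝ :=
  F.S t * (∫ s in 0..t, F.C s * g s) - F.C t * ∫ s in 0..t, F.S s * g s

noncomputable def duhamelDeriv (g : ℝ → ℝ) (t : ℝ) : ℝ :=
  F.S' t * (∫ s in 0..t, F.C s * g s) - F.C' t * ∫ s in 0..t, F.S s * g s

variable {g : ℝ → ℝ}

theorem duhamel_zero : F.duhamel g 0 = 0 := by
  simp [duhamel]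

theorem hasDerivAt_duhamel (hg : Continuous g) (t : ℝ) :
    HasDerivAt (F.duhamel g) (F.duhamelDeriv g t) t := by
  have hIC := hasDerivAt_integral_mul F.continuous_C hg t
  have hIS := hasDerivAt_integral_mul F.continuous_S hg t
  exact (((F.hasDerivAt_S t).mul hIC).sub ((F.hasDerivAt_C t).mul hIS)).congr_deriv
    (by simp only [duhamelDeriv]; ring)

theorem hasDerivAt_duhamelDeriv (hg : Continuous g) (t : ℝ) :
    HasDerivAt (F.duhamelDeriv g) (-lam * F.duhamel g t + g t) t := by
  have hIC := hasDerivAt_integral_mul F.continuous_C hg t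
  have hIS := hasDerivAt_integral_mul F.continuous_S hg t
  exact (((F.hasDerivAt_S' t).mul hIC).sub ((F.hasDerivAt_C' t).mul hIS)).congr_deriv
    (by simp only [duhamel]; linear_combination g t * F.wronskian_eq_one t)

theorem exists_contDiff_solution (hg : Continuous g) {b : ℝ} (hSb : F.S b ≠ 0) (h₁ h₂ : ℝ) :
    ∃ v : ℝ → ℝ, ContDiff ℝ 2 v ∧ (∀ t, deriv (deriv v) t + lam * v t = g t) ∧
      v 0 = h₁ ∧ v b = h₂ := by
  set β := (h₂ - h₁ * F.C b - F.duhamel g b) / F.S b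
  set v := fun t => h₁ * F.C t + β * F.S t + F.duhamel g t
  set v' := fun t => h₁ * F.C' t + β * F.S' t + F.duhamelDeriv g t
  have hv : ∀ t, HasDerivAt v (v' t) t := fun t =>
    (((F.hasDerivAt_C t).const_mul h₁).add ((F.hasDerivAt_S t).const_mul β)).add
      (F.hasDerivAt_duhamel hg t)
  have hv' : ∀ t, HasDerivAt v' (-lam * v t + g t) t := fun t =>
    ((((F.hasDerivAt_C' t).const_mul h₁).add ((F.hasDerivAt_S' t).const_mul β)).add
      (F.hasDerivAt_duhamelDeriv hg t)).congr_deriv (by ring)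
  have hv'' : deriv (deriv v) = fun t => -lam * v t + g t := by
    rw [funext fun t => (hv t).deriv]
    exact funext fun t => (hv' t).deriv
  refine ⟨v, contDiff_two_of_hasDerivAt_s3 hv hv' ?_, fun t => by rw [hv'']; ring, ?_, ?_⟩
  · exact (continuous_const.mul (continuous_iff_continuousAt.2 fun t => (hv t).continuousAt)).add
      hg
  · simp [v, F.C_zero, F.S_zero, F.duhamel_zero]
  · simp only [v, β]
    field_simp
    ring

theorem eqOn_of_contDiffOn {b : ℝ} (hb : 0 < b) (hSb : F.S b ≠ 0) {w v : ℝ → ℝ}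
    (hw : ContDiffOn ℝ 2 w (Icc 0 b)) (hv : ContDiffOn ℝ 2 v (Icc 0 b))
    (hode : ∀ t ∈ Ioo 0 b, deriv (deriv w) t + lam * w t = deriv (deriv v) t + lam * v t)
    (hw0 : w 0 = v 0) (hwb : w b = v b) : EqOn w v (Icc 0 b) := by
  have hC2 : ∀ f : ℝ → ℝ, ContDiffOn ℝ 2 f (Icc 0 b) → ∀ t ∈ Ioo 0 b, ContDiffAt ℝ 2 f t :=
    fun f hf t ht => hf.contDiffAt (Icc_mem_nhds ht.1 ht.2)
  have hu' : ∀ t ∈ Ioo 0 b, HasDerivAt (w - v) (deriv w t - deriv v t) t := fun t ht =>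
    ((hC2 w hw t ht).differentiableAt two_ne_zero).hasDerivAt.sub
      ((hC2 v hv t ht).differentiableAt two_ne_zero).hasDerivAt
  have hu'' : ∀ t ∈ Ioo 0 b, HasDerivAt (deriv w - deriv v) (-lam * (w - v) t) t := fun t ht =>
    ((hC2 w hw t ht).hasDerivAt_deriv.sub (hC2 v hv t ht).hasDerivAt_deriv).congr_deriv
      (by simp only [Pi.sub_apply]; linear_combination hode t ht)
  have hu := F.eqOn_zero_of_boundary hb hSb (hw.continuousOn.sub hv.continuousOn) hu' hu''
    (sub_eq_zero.2 hw0) (sub_eq_zero.2 hwb)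
  exact fun t ht => sub_eq_zero.1 (hu ht)

noncomputable def hyperbolic {lam ω : ℝ} (hω : ω ≠ 0) (hlam : ω ^ 2 = -lam) :
    FundamentalSystem lam where
  C t := cosh (ω * t)
  S t := sinh (ω * t) / ω
  C' t := ω * sinh (ω * t)
  S' t := cosh (ω * t)
  hasDerivAt_C t := (hasDerivAt_const_mul ω).cosh.congr_deriv (by ring)
  hasDerivAt_C' t := ((hasDerivAt_const_mul ω).sinh.const_mul ω).congr_deriv
    (by linear_combination cosh (ω * t) * hlam)
  hasDerivAt_S t := ((hasDerivAt_const_mul ω).sinh.div_const ω).congr_deriv (by field_simp)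
  hasDerivAt_S' t := (hasDerivAt_const_mul ω).cosh.congr_deriv
    (by field_simp; linear_combination sinh (ω * t) * hlam)
  C_zero := by simp
  C'_zero := by simp
  S_zero := by simp
  S'_zero := by simp

def linear : FundamentalSystem 0 where
  C _ := 1
  S t := t
  C' _ := 0
  S' _ := 1
  hasDerivAt_C t := hasDerivAt_const t 1
  hasDerivAt_C' t := by simpa using hasDerivAt_const t (0 : ℝ)
  hasDerivAt_S t := hasDerivAt_id' t
  hasDerivAt_S' t := by simpa using hasDerivAt_const t (1 : ℝ)
  C_zero := rfl
  C'_zero := rfl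
  S_zero := rfl
  S'_zero := rfl

noncomputable def trigonometric {lam ω : ℝ} (hω : ω ≠ 0) (hlam : ω ^ 2 = lam) :
    FundamentalSystem lam where
  C t := cos (ω * t)
  S t := sin (ω * t) / ω
  C' t := -(ω * sin (ω * t))
  S' t := cos (ω * t)
  hasDerivAt_C t := (hasDerivAt_const_mul ω).cos.congr_deriv (by ring)
  hasDerivAt_C' t := ((hasDerivAt_const_mul ω).sin.const_mul ω).neg.congr_deriv
    (by linear_combination -cos (ω * t) * hlam)
  hasDerivAt_S t := ((hasDerivAt_const_mul ω).sin.div_const ω).congr_deriv (by field_simp)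
  hasDerivAt_S' t := (hasDerivAt_const_mul ω).cos.congr_deriv
    (by field_simp; linear_combination -sin (ω * t) * hlam)
  C_zero := by simp
  C'_zero := by simp
  S_zero := by simp
  S'_zero := by simp

theorem hyperbolic_S_ne_zero {lam ω : ℝ} (hω : 0 < ω) (hlam : ω ^ 2 = -lam) {b : ℝ}
    (hb : 0 < b) : (hyperbolic hω.ne' hlam).S b ≠ 0 :=
  div_ne_zero (sinh_pos_iff.2 (mul_pos hω hb)).ne' hω.ne'

theorem trigonometric_S_pi_ne_zero {lam ω : ℝ} (hω : 0 < ω) (hlam : ω ^ 2 = lam)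
    (hω_nat : ∀ n : ℕ, 0 < n → ω ≠ n) : (trigonometric hω.ne' hlam).S π ≠ 0 := by
  refine div_ne_zero (fun hsin => ?_) hω.ne'
  obtain ⟨n, hn⟩ := sin_eq_zero_iff.1 hsin
  have hωn : ω = n := (mul_right_cancel₀ pi_ne_zero hn).symm
  have hn_pos : 0 < n := by exact_mod_cast hωn ▸ hω
  lift n to ℕ using hn_pos.le
  exact hω_nat n (by exact_mod_cast hn_pos) (by exact_mod_cast hωn)

theorem exists_S_pi_ne_zero {lam : ℝ} (hlam : ∀ n : ℕ, 0 < n → lam ≠ (n : ℝ) ^ 2) :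
    ∃ F : FundamentalSystem lam, F.S π ≠ 0 := by
  rcases lt_trichotomy lam 0 with hneg | rfl | hpos
  · have hω : 0 < √(-lam) := sqrt_pos.2 (neg_pos.2 hneg)
    exact ⟨_, hyperbolic_S_ne_zero hω (sq_sqrt (neg_nonneg.2 hneg.le)) pi_pos⟩
  · exact ⟨linear, pi_ne_zero⟩
  · have hω : 0 < √lam := sqrt_pos.2 hpos
    refine ⟨_, trigonometric_S_pi_ne_zero hω (sq_sqrt hpos.le) fun n hn hωn => hlam n hn ?_⟩
    rw [← hωn, sq_sqrt hpos.le]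

end FundamentalSystem

/-- For `λ` not an eigenvalue (`λ ≠ n²` for every positive integer `n`),
the linear boundary value problem `v'' + λ v = h` on `(0, π)` with `v(0) = h₁`, `v(π) = h₂`
has exactly one twice continuously differentiable solution on `[0, π]`. -/
theorem linear_bvp_existence_uniqueness_nonresonant
    (lam : ℝ) (hlam : ∀ n : ℕ, 0 < n → lam ≠ (n : ℝ) ^ 2)
    (h : ℝ → ℝ) (hh : ContinuousOn h (Icc 0 π)) (h₁ h₂ : ℝ) :
    ∃ v : ℝ → ℝ,
      (ContDiffOn ℝ 2 v (Icc 0 π) ∧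
        (∀ t ∈ Ioo (0 : ℝ) π, deriv (deriv v) t + lam * v t = h t) ∧
        v 0 = h₁ ∧ v π = h₂) ∧
      ∀ w : ℝ → ℝ,
        (ContDiffOn ℝ 2 w (Icc 0 π) ∧
          (∀ t ∈ Ioo (0 : ℝ) π, deriv (deriv w) t + lam * w t = h t) ∧
          w 0 = h₁ ∧ w π = h₂) →
        EqOn w v (Icc 0 π) := by
  obtain ⟨F, hSπ⟩ := FundamentalSystem.exists_S_pi_ne_zero hlam
  obtain ⟨g, hg, hgh⟩ := hh.exists_continuous_eqOn_Icc pi_pos.le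
  obtain ⟨v, hv, hv_ode, hv0, hvπ⟩ := F.exists_contDiff_solution hg hSπ h₁ h₂
  refine ⟨v, ⟨hv.contDiffOn, fun t ht => (hv_ode t).trans (hgh (Ioo_subset_Icc_self ht)), hv0,
    hvπ⟩, ?_⟩
  rintro w ⟨hw, hw_ode, hw0, hwπ⟩
  refine F.eqOn_of_contDiffOn pi_pos hSπ hw hv.contDiffOn (fun t ht => ?_) (hw0.trans hv0.symm)
    (hwπ.trans hvπ.symm)
  rw [hw_ode t ht, hv_ode t, hgh (Ioo_subset_Icc_self ht)]
end

section
/- Let n be a positive integer, let h : [0,π] → ℝ be continuous, and let h₁, h₂ ∈ ℝ. There exists a twice continuously differentiable function v : [0,π] → ℝ satisfying v''(t) + n² v(t) = h(t) for t ∈ (0,π), v(0) = h₁, and v(π) = h₂ if and only if n·(h₁ + (−1)^{n+1} h₂) = ∫₀^π sin(n t) h(t) dt. -/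
open Set Real

/-!
The Wronskian `W = sin(nt) v' - n cos(nt) v` of a solution `v` with the resonant mode `sin(nt)`
satisfies `W' = sin(nt) (v'' + n² v) = sin(nt) h`, and `W(0) = -n h₁`, `W(π) = -n (-1)ⁿ h₂`;
integrating `W'` over `[0, π]` gives the solvability condition.
Conversely, after extending `h` continuously to `ℝ`, variation of parameters gives the solution
of `v'' + n² v = h`, `v(0) = h₁`, `v'(0) = 0`, whose value at `π` is
`(-1)ⁿ (h₁ - (1/n) ∫₀^π sin(nt) h(t) dt)`; this is `h₂` exactly under the condition.
-/

theorem ContDiffOn.hasDerivAt_of_mem_Ioo {a b t : ℝ} {v : ℝ → ℝ} {k : WithTop ℕ∞}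
    (hv : ContDiffOn ℝ k v (Icc a b)) (hk : k ≠ 0) (ht : t ∈ Ioo a b) :
    HasDerivAt v (derivWithin v (Icc a b) t) t := by
  have hnhds : Icc a b ∈ nhds t := Icc_mem_nhds ht.1 ht.2
  have hdiff := hv.differentiableOn hk t (Ioo_subset_Icc_self ht)
  rw [derivWithin_of_mem_nhds hnhds]
  exact (hdiff.differentiableAt hnhds).hasDerivAt

theorem ContDiffOn.hasDerivAt_derivWithin_of_mem_Ioo {a b t : ℝ} {v : ℝ → ℝ}
    (hv : ContDiffOn ℝ 2 v (Icc a b)) (ht : t ∈ Ioo a b) :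
    HasDerivAt (derivWithin v (Icc a b)) (deriv (deriv v) t) t := by
  have hw : ContDiffOn ℝ 1 (derivWithin v (Icc a b)) (Icc a b) :=
    hv.derivWithin (uniqueDiffOn_Icc (ht.1.trans ht.2)) (by norm_num)
  have hloc : derivWithin v (Icc a b) =ᶠ[nhds t] deriv v :=
    Filter.eventuallyEq_of_mem (Ioo_mem_nhds ht.1 ht.2) fun s hs =>
      derivWithin_of_mem_nhds (Icc_mem_nhds hs.1 hs.2)
  rw [← hloc.deriv_eq, ← derivWithin_of_mem_nhds (Icc_mem_nhds ht.1 ht.2)]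
  exact hw.hasDerivAt_of_mem_Ioo one_ne_zero ht

noncomputable def sinWronskian (ω : ℝ) (v v' : ℝ → ℝ) (t : ℝ) : ℝ :=
  sin (ω * t) * v' t - ω * cos (ω * t) * v t

theorem hasDerivAt_sin_const_mul (ω t : ℝ) :
    HasDerivAt (fun s => sin (ω * s)) (ω * cos (ω * t)) t := by
  simpa [mul_comm] using ((hasDerivAt_id t).const_mul ω).sin

theorem hasDerivAt_cos_const_mul (ω t : ℝ) :
    HasDerivAt (fun s => cos (ω * s)) (-(ω * sin (ω * t))) t := by
  simpa [mul_comm] using ((hasDerivAt_id t).const_mul ω).cos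

theorem hasDerivAt_sinWronskian (ω : ℝ) {v v' : ℝ → ℝ} {t v'' : ℝ}
    (hv : HasDerivAt v (v' t) t) (hv' : HasDerivAt v' v'' t) :
    HasDerivAt (sinWronskian ω v v') (sin (ω * t) * (v'' + ω ^ 2 * v t)) t := by
  unfold sinWronskian
  exact (((hasDerivAt_sin_const_mul ω t).mul hv').sub
    (((hasDerivAt_cos_const_mul ω t).const_mul ω).mul hv)).congr_deriv (by ring)

theorem integral_sin_mul_eq_sinWronskian_sub {ω a b : ℝ} (hab : a < b) {v h : ℝ → ℝ}
    (hv : ContDiffOn ℝ 2 v (Icc a b)) (hh : ContinuousOn h (Icc a b))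
    (hode : ∀ t ∈ Ioo a b, deriv (deriv v) t + ω ^ 2 * v t = h t) :
    ∫ t in a..b, sin (ω * t) * h t =
      sinWronskian ω v (derivWithin v (Icc a b)) b -
        sinWronskian ω v (derivWithin v (Icc a b)) a := by
  have hw : ContinuousOn (derivWithin v (Icc a b)) (Icc a b) :=
    (hv.derivWithin (m := 1) (uniqueDiffOn_Icc hab) (by norm_num)).continuousOn
  have hvc : ContinuousOn v (Icc a b) := hv.continuousOn
  refine intervalIntegral.integral_eq_sub_of_hasDeriv_right_of_le hab.le
    (by unfold sinWronskian; fun_prop) (fun t ht => ?_) ?_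
  · rw [← hode t ht]
    exact (hasDerivAt_sinWronskian ω (hv.hasDerivAt_of_mem_Ioo two_ne_zero ht)
      (hv.hasDerivAt_derivWithin_of_mem_Ioo ht)).hasDerivWithinAt
  · exact ((continuous_sin.comp (continuous_const_mul ω)).continuousOn.mul hh)
      |>.intervalIntegrable_of_Icc hab.le

theorem contDiff_two_of_hasDerivAt_s5 {v v' v'' : ℝ → ℝ} (hv : ∀ t, HasDerivAt v (v' t) t)
    (hv' : ∀ t, HasDerivAt v' (v'' t) t) (hv'' : Continuous v'') : ContDiff ℝ 2 v := by
  have hderiv : deriv v = v' := funext fun t => (hv t).deriv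
  have hderiv' : deriv v' = v'' := funext fun t => (hv' t).deriv
  rw [show (2 : WithTop ℕ∞) = 1 + 1 from rfl, contDiff_succ_iff_deriv, hderiv,
    contDiff_one_iff_deriv, hderiv']
  exact ⟨fun t => (hv t).differentiableAt, by simp, fun t => (hv' t).differentiableAt, hv''⟩

section VariationOfParameters

variable (ω c : ℝ) (H : ℝ → ℝ)

/-- `c cos(ωt) + (1/ω) ∫₀ᵗ sin(ω(t - s)) H(s) ds`, with `sin(ω(t - s))` expanded so that
`t` leaves the integrands. -/
noncomputable def forcedOscillator (t : ℝ) : ℝ :=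
  c * cos (ω * t) + (sin (ω * t) * (∫ s in 0..t, cos (ω * s) * H s) -
    cos (ω * t) * ∫ s in 0..t, sin (ω * s) * H s) / ω

noncomputable def forcedOscillatorDeriv (t : ℝ) : ℝ :=
  -(ω * c * sin (ω * t)) + cos (ω * t) * (∫ s in 0..t, cos (ω * s) * H s) +
    sin (ω * t) * ∫ s in 0..t, sin (ω * s) * H s

variable {ω H}

theorem hasDerivAt_forcedOscillator (hω : ω ≠ 0) (hH : Continuous H) (t : ℝ) :
    HasDerivAt (forcedOscillator ω c H) (forcedOscillatorDeriv ω c H t) t := by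
  have hA := (Continuous.integral_hasStrictDerivAt
    (by fun_prop : Continuous fun s => cos (ω * s) * H s) 0 t).hasDerivAt
  have hB := (Continuous.integral_hasStrictDerivAt
    (by fun_prop : Continuous fun s => sin (ω * s) * H s) 0 t).hasDerivAt
  refine (((hasDerivAt_cos_const_mul ω t).const_mul c).add
    ((((hasDerivAt_sin_const_mul ω t).mul hA).sub
      ((hasDerivAt_cos_const_mul ω t).mul hB)).div_const ω)).congr_deriv ?_
  unfold forcedOscillatorDeriv
  field_simp
  ring

theorem hasDerivAt_forcedOscillatorDeriv (hω : ω ≠ 0) (hH : Continuous H) (t : ℝ) :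
    HasDerivAt (forcedOscillatorDeriv ω c H) (H t - ω ^ 2 * forcedOscillator ω c H t) t := by
  have hA := (Continuous.integral_hasStrictDerivAt
    (by fun_prop : Continuous fun s => cos (ω * s) * H s) 0 t).hasDerivAt
  have hB := (Continuous.integral_hasStrictDerivAt
    (by fun_prop : Continuous fun s => sin (ω * s) * H s) 0 t).hasDerivAt
  refine ((((hasDerivAt_sin_const_mul ω t).const_mul (ω * c)).neg.add
    ((hasDerivAt_cos_const_mul ω t).mul hA)).add
      ((hasDerivAt_sin_const_mul ω t).mul hB)).congr_deriv ?_
  unfold forcedOscillator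
  field_simp
  linear_combination H t * sin_sq_add_cos_sq (ω * t)

theorem contDiff_forcedOscillator (hω : ω ≠ 0) (hH : Continuous H) :
    ContDiff ℝ 2 (forcedOscillator ω c H) := by
  refine contDiff_two_of_hasDerivAt_s5 (hasDerivAt_forcedOscillator c hω hH)
    (hasDerivAt_forcedOscillatorDeriv c hω hH) (hH.sub (continuous_const.mul ?_))
  exact Differentiable.continuous fun t => (hasDerivAt_forcedOscillator c hω hH t).differentiableAt

theorem deriv_deriv_forcedOscillator_add (hω : ω ≠ 0) (hH : Continuous H) (t : ℝ) :
    deriv (deriv (forcedOscillator ω c H)) t + ω ^ 2 * forcedOscillator ω c H t = H t := by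
  rw [funext fun s => (hasDerivAt_forcedOscillator c hω hH s).deriv,
    (hasDerivAt_forcedOscillatorDeriv c hω hH t).deriv]
  ring

theorem forcedOscillator_zero : forcedOscillator ω c H 0 = c := by
  simp [forcedOscillator]

theorem forcedOscillator_natCast_mul_pi (n : ℕ) :
    forcedOscillator n c H π = (-1) ^ n * (c - (∫ s in 0..π, sin (n * s) * H s) / n) := by
  simp only [forcedOscillator, sin_nat_mul_pi, cos_nat_mul_pi]
  ring

end VariationOfParameters

/-- Solvability of the resonant linear boundary value problem
`v'' + n² v = h` on `(0,π)`, `v(0) = h₁`, `v(π) = h₂`: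
a solution exists iff `n (h₁ + (−1)^{n+1} h₂) = ∫₀^π sin(nt) h(t) dt`. -/
theorem resonant_linear_bvp_solvability (n : ℕ) (hn : 0 < n)
    (h : ℝ → ℝ) (hh : ContinuousOn h (Icc 0 π)) (h₁ h₂ : ℝ) :
    (∃ v : ℝ → ℝ,
        ContDiffOn ℝ 2 v (Icc 0 π) ∧
        (∀ t ∈ Ioo (0 : ℝ) π, deriv (deriv v) t + (n : ℝ) ^ 2 * v t = h t) ∧
        v 0 = h₁ ∧ v π = h₂) ↔
      (n : ℝ) * (h₁ + (-1 : ℝ) ^ (n + 1) * h₂) = ∫ t in (0 : ℝ)..π, Real.sin (n * t) * h t := by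
  constructor
  · rintro ⟨v, hv, hode, hv0, hvπ⟩
    rw [integral_sin_mul_eq_sinWronskian_sub pi_pos hv hh hode]
    simp only [sinWronskian, sin_nat_mul_pi, cos_nat_mul_pi, mul_zero, sin_zero, cos_zero, hv0,
      hvπ]
    ring
  · intro hcond
    set H := IccExtend pi_pos.le ((Icc 0 π).domRestrict h)
    have hH : Continuous H := continuous_IccExtend_iff.mpr hh.domRestrict
    have hHh : EqOn H h (Icc 0 π) := fun t ht => IccExtend_of_mem _ _ ht
    have hn' : (n : ℝ) ≠ 0 := by positivity
    refine ⟨forcedOscillator n h₁ H, (contDiff_forcedOscillator h₁ hn' hH).contDiffOn,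
      fun t ht => ?_, forcedOscillator_zero h₁, ?_⟩
    · rw [deriv_deriv_forcedOscillator_add h₁ hn' hH, hHh (Ioo_subset_Icc_self ht)]
    · have hint : ∫ s in 0..π, sin (n * s) * H s = ∫ s in 0..π, sin (n * s) * h s :=
        intervalIntegral.integral_congr fun s hs => by
          rw [uIcc_of_le pi_pos.le] at hs
          simp only [hHh hs]
      have hsign : (-1 : ℝ) ^ n * (-1) ^ n = 1 := by rw [← mul_pow]; norm_num
      rw [forcedOscillator_natCast_mul_pi, hint, ← hcond, mul_div_cancel_left₀ _ hn', pow_succ]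
      linear_combination h₂ * hsign
end

section
/- Let n be a positive integer and let h : [0,π] → ℝ be continuous. There exists a twice continuously differentiable function v : [0,π] → ℝ satisfying v''(t) + n² v(t) = h(t) for t ∈ (0,π), v(0) = 0, and v(π) = 0 if and only if ∫₀^π sin(n t) h(t) dt = 0. -/
/-!
If `v` solves the problem, the Wronskian `W = sin (n t) v' - n cos (n t) v` of `v` and the
resonant mode `sin (n t)` satisfies `W' = sin (n t) (v'' + n² v) = sin (n t) h`, and `W` vanishes
at `0` and `π`; integrating gives the orthogonality condition. Conversely, variation of parameters
gives `v t = ∫₀ᵗ sin (n (t - s)) h s ds / n`, solving the equation with `v 0 = 0`, and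
`v π = -(cos (n π) / n) ∫₀^π sin (n s) h s ds` vanishes exactly under that condition.
-/

open Set Real Topology

lemma hasDerivAt_sin_mul (ω t : ℝ) :
    HasDerivAt (fun x => sin (ω * x)) (ω * cos (ω * t)) t := by
  simpa [mul_comm] using ((hasDerivAt_id t).const_mul ω).sin

lemma hasDerivAt_cos_mul (ω t : ℝ) :
    HasDerivAt (fun x => cos (ω * x)) (-ω * sin (ω * t)) t := by
  simpa [mul_comm] using ((hasDerivAt_id t).const_mul ω).cos

section Wronskian

variable {ω a b : ℝ} {v h : ℝ → ℝ}

lemma ContDiffOn.hasDerivAt_derivWithin {s : Set ℝ} (hv : ContDiffOn ℝ 2 v s) {t : ℝ}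
    (hs : s ∈ 𝓝 t) : HasDerivAt (derivWithin v s) (deriv (deriv v) t) t := by
  have hderiv : derivWithin v s =ᶠ[𝓝 t] deriv v := by
    filter_upwards [eventually_mem_nhds_iff.2 hs] with x hx using derivWithin_of_mem_nhds hx
  have hv' : ContDiffOn ℝ 1 (deriv v) (interior s) :=
    ((contDiffOn_succ_iff_deriv_of_isOpen isOpen_interior).1 (hv.mono interior_subset)).2.2
  exact ((hv'.differentiableOn one_ne_zero).differentiableAt (interior_mem_nhds.2 hs)).hasDerivAt
    |>.congr_of_eventuallyEq hderiv

theorem integral_sin_mul_eq_of_ode (hab : a < b) (hv : ContDiffOn ℝ 2 v (Icc a b))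
    (hh : ContinuousOn h (Icc a b))
    (hode : ∀ t ∈ Ioo a b, deriv (deriv v) t + ω ^ 2 * v t = h t) :
    ∫ t in a..b, sin (ω * t) * h t =
      (sin (ω * b) * derivWithin v (Icc a b) b - ω * cos (ω * b) * v b) -
        (sin (ω * a) * derivWithin v (Icc a b) a - ω * cos (ω * a) * v a) := by
  have hsin : Continuous fun t => sin (ω * t) := by fun_prop
  have hcos : Continuous fun t => cos (ω * t) := by fun_prop
  apply intervalIntegral.integral_eq_sub_of_hasDerivAt_of_le hab.le
    (f := fun t => sin (ω * t) * derivWithin v (Icc a b) t - ω * cos (ω * t) * v t)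
  · exact (hsin.continuousOn.mul (hv.continuousOn_derivWithin (uniqueDiffOn_Icc hab)
      one_le_two)).sub ((continuous_const.mul hcos).continuousOn.mul hv.continuousOn)
  · intro t ht
    have hIcc : Icc a b ∈ 𝓝 t := Icc_mem_nhds ht.1 ht.2
    have hv' : HasDerivAt v (derivWithin v (Icc a b) t) t :=
      (hv.differentiableOn two_ne_zero t (Ioo_subset_Icc_self ht)).hasDerivWithinAt.hasDerivAt hIcc
    refine (((hasDerivAt_sin_mul ω t).mul (hv.hasDerivAt_derivWithin hIcc)).sub
      (((hasDerivAt_cos_mul ω t).const_mul ω).mul hv')).congr_deriv ?_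
    rw [← hode t ht]
    ring
  · exact (hsin.continuousOn.mul hh).intervalIntegrable_of_Icc hab.le

end Wronskian

/-- `∫₀ᵗ sin (ω (t - s)) f s ds / ω`, with the sine of the difference expanded. -/
noncomputable def variationOfParameters (ω : ℝ) (f : ℝ → ℝ) (t : ℝ) : ℝ :=
  ω⁻¹ * (sin (ω * t) * (∫ s in 0..t, cos (ω * s) * f s) -
    cos (ω * t) * ∫ s in 0..t, sin (ω * s) * f s)

section VariationOfParameters

variable {ω : ℝ} {f : ℝ → ℝ}

lemma hasDerivAt_integral_cos_mul (hf : Continuous f) (t : ℝ) :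
    HasDerivAt (fun t => ∫ s in 0..t, cos (ω * s) * f s) (cos (ω * t) * f t) t :=
  ((by fun_prop : Continuous fun s => cos (ω * s)).mul hf).integral_hasStrictDerivAt 0 t
    |>.hasDerivAt

lemma hasDerivAt_integral_sin_mul (hf : Continuous f) (t : ℝ) :
    HasDerivAt (fun t => ∫ s in 0..t, sin (ω * s) * f s) (sin (ω * t) * f t) t :=
  ((by fun_prop : Continuous fun s => sin (ω * s)).mul hf).integral_hasStrictDerivAt 0 t
    |>.hasDerivAt

lemma hasDerivAt_variationOfParameters (hω : ω ≠ 0) (hf : Continuous f) (t : ℝ) :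
    HasDerivAt (variationOfParameters ω f)
      (cos (ω * t) * (∫ s in 0..t, cos (ω * s) * f s) +
        sin (ω * t) * ∫ s in 0..t, sin (ω * s) * f s) t := by
  refine ((((hasDerivAt_sin_mul ω t).mul (hasDerivAt_integral_cos_mul hf t)).sub
    ((hasDerivAt_cos_mul ω t).mul (hasDerivAt_integral_sin_mul hf t))).const_mul
      ω⁻¹).congr_deriv ?_
  field_simp
  ring

lemma hasDerivAt_deriv_variationOfParameters (hf : Continuous f) (t : ℝ) :
    HasDerivAt (fun t => cos (ω * t) * (∫ s in 0..t, cos (ω * s) * f s) +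
        sin (ω * t) * ∫ s in 0..t, sin (ω * s) * f s)
      (f t - ω ^ 2 * variationOfParameters ω f t) t := by
  refine (((hasDerivAt_cos_mul ω t).mul (hasDerivAt_integral_cos_mul hf t)).add
    ((hasDerivAt_sin_mul ω t).mul (hasDerivAt_integral_sin_mul hf t))).congr_deriv ?_
  have hω : ω ^ 2 * ω⁻¹ = ω := by rw [sq, mul_self_mul_inv]
  rw [variationOfParameters]
  linear_combination f t * sin_sq_add_cos_sq (ω * t) +
    (sin (ω * t) * (∫ s in 0..t, cos (ω * s) * f s) -
      cos (ω * t) * ∫ s in 0..t, sin (ω * s) * f s) * hω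

lemma deriv_variationOfParameters (hω : ω ≠ 0) (hf : Continuous f) :
    deriv (variationOfParameters ω f) = fun t =>
      cos (ω * t) * (∫ s in 0..t, cos (ω * s) * f s) +
        sin (ω * t) * ∫ s in 0..t, sin (ω * s) * f s :=
  funext fun t => (hasDerivAt_variationOfParameters hω hf t).deriv

lemma deriv_deriv_variationOfParameters (hω : ω ≠ 0) (hf : Continuous f) (t : ℝ) :
    deriv (deriv (variationOfParameters ω f)) t = f t - ω ^ 2 * variationOfParameters ω f t := by
  rw [deriv_variationOfParameters hω hf, (hasDerivAt_deriv_variationOfParameters hf t).deriv]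

lemma contDiff_variationOfParameters (hω : ω ≠ 0) (hf : Continuous f) :
    ContDiff ℝ 2 (variationOfParameters ω f) := by
  have hv := hasDerivAt_variationOfParameters hω hf
  have hdiff : Differentiable ℝ (variationOfParameters ω f) := fun t => (hv t).differentiableAt
  rw [show (2 : WithTop ℕ∞) = 1 + 1 from rfl, contDiff_succ_iff_deriv, contDiff_one_iff_deriv]
  refine ⟨hdiff, by simp, ?_, ?_⟩
  · rw [deriv_variationOfParameters hω hf]
    exact fun t => (hasDerivAt_deriv_variationOfParameters hf t).differentiableAt
  · rw [funext (deriv_deriv_variationOfParameters hω hf)]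
    exact hf.sub (continuous_const.mul hdiff.continuous)

end VariationOfParameters

/-- The resonant Dirichlet problem `v'' + n² v = h` on `(0,π)`,
`v(0) = 0 = v(π)`, has a solution iff `∫₀^π sin(nt) h(t) dt = 0`. -/
theorem resonant_dirichlet_solvability (n : ℕ) (hn : 0 < n)
    (h : ℝ → ℝ) (hh : ContinuousOn h (Icc 0 π)) :
    (∃ v : ℝ → ℝ,
        ContDiffOn ℝ 2 v (Icc 0 π) ∧
        (∀ t ∈ Ioo (0 : ℝ) π, deriv (deriv v) t + (n : ℝ) ^ 2 * v t = h t) ∧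
        v 0 = 0 ∧ v π = 0) ↔
      ∫ t in (0 : ℝ)..π, Real.sin (n * t) * h t = 0 := by
  constructor
  · rintro ⟨v, hv, hode, hv0, hvπ⟩
    rw [integral_sin_mul_eq_of_ode pi_pos hv hh hode]
    simp [hv0, hvπ, sin_nat_mul_pi]
  · intro horth
    have hn' : (n : ℝ) ≠ 0 := by positivity
    set H := IccExtend pi_pos.le ((Icc 0 π).domRestrict h)
    have hHc : Continuous H := hh.domRestrict.Icc_extend'
    have hHh : EqOn H h (Icc 0 π) := fun t ht => IccExtend_of_mem _ _ ht
    have hHorth : ∫ t in (0 : ℝ)..π, sin (n * t) * H t = 0 := by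
      refine (intervalIntegral.integral_congr fun t ht => ?_).trans horth
      rw [uIcc_of_le pi_pos.le] at ht
      simp only [hHh ht]
    refine ⟨variationOfParameters n H, (contDiff_variationOfParameters hn' hHc).contDiffOn,
      fun t ht => ?_, by simp [variationOfParameters],
      by simp [variationOfParameters, sin_nat_mul_pi, hHorth]⟩
    rw [deriv_deriv_variationOfParameters hn' hHc, ← hHh (Ioo_subset_Icc_self ht)]
    ring
end

section
/- Let n be an even positive integer, let m be a positive integer with m > 2, let K > 0, and let t₁ ∈ [0,π] satisfy sin(n t₁) ≠ 0 (equivalently, t₁ ≠ kπ/n for every k ∈ {0, 1, …, n}). Then there exists δ > 0 such that for every ε with |ε| < δ there exists a twice continuously differentiable function v : [0,π] → ℝ satisfying v''(t) + n² v(t) = ε v(t)² for t ∈ (0,π), v(0) = 1 + ε v(t₁)^m, and v(π) = 1 + ε K. -/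
/-!
Put `ν = n`. As `n` is even, `sin (ν π) = 0` and `cos (ν π) = 1`: the linear problem is resonant.
Fix a slope `b` and replace the condition at `π` by `v' 0 = ν b`. By variation of constants the
remaining problem is a fixed-point equation, whose map is a contraction for small `ε` once the
nonlinearity is clipped to a ball; the clipping is harmless because the fixed point `V_b` stays
`O(ε)`-close to the homogeneous solution `w_b t = cos (ν t) + b sin (ν t)`. The condition at `π`
then reads `ε H(b) = 0` with `H(b) = V_b(t₁)^m - K - ν⁻¹ ∫₀^π sin (ν s) V_b(s)² ds`. Resonance makes
`∫₀^π sin (ν s) w_b(s)² ds` vanish, so `H(b) = w_b(t₁)^m - K + O(ε)`. Since `sin (ν t₁) ≠ 0`,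
`w_b(t₁)` takes the values `0` and `(K + 1)^(1/m)` for suitable `b`, where `H` has opposite signs;
`V_b` depends continuously on `b`, and the intermediate value theorem yields a zero of `H`.
-/

open Set Real Filter Topology intervalIntegral
open scoped NNReal

noncomputable section

namespace ResonantBVP

theorem continuous_fixedPoint {α P : Type*} [MetricSpace α] [Nonempty α] [CompleteSpace α]
    [TopologicalSpace P] {K : ℝ≥0} {f : P → α → α} (hf : ∀ p, ContractingWith K (f p))
    (hcont : ∀ x, Continuous fun p => f p x) :
    Continuous fun p => ContractingWith.fixedPoint (f p) (hf p) := by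
  refine continuous_iff_continuousAt.2 fun p₀ => ?_
  set x₀ := ContractingWith.fixedPoint (f p₀) (hf p₀)
  have hx₀ : f p₀ x₀ = x₀ := (hf p₀).fixedPoint_isFixedPt
  rw [ContinuousAt, tendsto_iff_dist_tendsto_zero]
  have hlim : Tendsto (fun p => dist x₀ (f p x₀) / (1 - K)) (𝓝 p₀) (𝓝 0) := by
    simpa [hx₀] using
      ((tendsto_const_nhds (x := x₀)).dist ((hcont x₀).tendsto p₀)).div_const (1 - K : ℝ)
  refine squeeze_zero (fun _ => dist_nonneg) (fun p => ?_) hlim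
  rw [dist_comm]
  exact (hf p).dist_fixedPoint_le x₀

theorem contDiff_two_of_hasDerivAt {f f' f'' : ℝ → ℝ} (hf : ∀ t, HasDerivAt f (f' t) t)
    (hf' : ∀ t, HasDerivAt f' (f'' t) t) (hf'' : Continuous f'') : ContDiff ℝ 2 f := by
  have hderiv : deriv f = f' := funext fun t => (hf t).deriv
  have hderiv' : deriv f' = f'' := funext fun t => (hf' t).deriv
  rw [show (2 : WithTop ℕ∞) = 1 + 1 from rfl, contDiff_succ_iff_deriv, hderiv,
    contDiff_one_iff_deriv, hderiv']
  exact ⟨fun t => (hf t).differentiableAt, by simp, fun t => (hf' t).differentiableAt, hf''⟩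

theorem abs_pow_sub_pow_le_of_abs_le {x y R : ℝ} (hx : |x| ≤ R) (hy : |y| ≤ R) (n : ℕ) :
    |x ^ n - y ^ n| ≤ n * R ^ (n - 1) * |x - y| := by
  have hR : 0 ≤ R := (abs_nonneg x).trans hx
  calc |x ^ n - y ^ n| ≤ |x - y| * n * max |x| |y| ^ (n - 1) := abs_pow_sub_pow_le x y n
    _ ≤ |x - y| * n * R ^ (n - 1) := by gcongr; exact max_le hx hy
    _ = n * R ^ (n - 1) * |x - y| := by ring

theorem abs_integral_mul_sub_integral_mul_le {φ g₁ g₂ : ℝ → ℝ} {t M : ℝ} (hφ : Continuous φ)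
    (hφ1 : ∀ s, |φ s| ≤ 1) (hg₁ : Continuous g₁) (hg₂ : Continuous g₂) (ht : 0 ≤ t)
    (hM : ∀ s ∈ Icc 0 t, |g₁ s - g₂ s| ≤ M) :
    |(∫ s in 0..t, φ s * g₁ s) - ∫ s in 0..t, φ s * g₂ s| ≤ M * t := by
  have hi₁ : Continuous fun s => φ s * g₁ s := hφ.mul hg₁
  have hi₂ : Continuous fun s => φ s * g₂ s := hφ.mul hg₂
  rw [← integral_sub (hi₁.intervalIntegrable _ _) (hi₂.intervalIntegrable _ _)]
  have h := norm_integral_le_of_norm_le_const (a := 0) (b := t) (C := M)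
    (f := fun s => φ s * g₁ s - φ s * g₂ s) fun s hs => by
      rw [uIoc_of_le ht] at hs
      rw [Real.norm_eq_abs, ← mul_sub, abs_mul]
      have hMs := hM s (Ioc_subset_Icc_self hs)
      exact (mul_le_of_le_one_left (abs_nonneg _) (hφ1 s)).trans hMs
  simpa [abs_of_nonneg ht] using h

section Oscillator

variable {ν a b : ℝ} {g : ℝ → ℝ}

/-- The solution of `y'' + ν² y = g` with `y 0 = a`, `y' 0 = ν b`, by variation of constants. -/
def oscSol (ν a b : ℝ) (g : ℝ → ℝ) (t : ℝ) : ℝ :=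
  a * cos (ν * t) + b * sin (ν * t) +
    (sin (ν * t) * (∫ s in 0..t, cos (ν * s) * g s) -
      cos (ν * t) * ∫ s in 0..t, sin (ν * s) * g s) / ν

def oscSolDeriv (ν a b : ℝ) (g : ℝ → ℝ) (t : ℝ) : ℝ :=
  ν * (b * cos (ν * t) - a * sin (ν * t)) +
    (cos (ν * t) * (∫ s in 0..t, cos (ν * s) * g s) +
      sin (ν * t) * ∫ s in 0..t, sin (ν * s) * g s)

theorem hasDerivAt_cos_mul (ν t : ℝ) :
    HasDerivAt (fun t => cos (ν * t)) (-(sin (ν * t) * ν)) t := by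
  simpa using ((hasDerivAt_id t).const_mul ν).cos

theorem hasDerivAt_sin_mul (ν t : ℝ) :
    HasDerivAt (fun t => sin (ν * t)) (cos (ν * t) * ν) t := by
  simpa using ((hasDerivAt_id t).const_mul ν).sin

theorem hasDerivAt_integral_mul {φ : ℝ → ℝ} (hφ : Continuous φ) (hg : Continuous g) (t : ℝ) :
    HasDerivAt (fun t => ∫ s in 0..t, φ s * g s) (φ t * g t) t :=
  ((hφ.mul hg).integral_hasStrictDerivAt 0 t).hasDerivAt

theorem hasDerivAt_oscSol (hν : ν ≠ 0) (hg : Continuous g) (t : ℝ) :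
    HasDerivAt (oscSol ν a b g) (oscSolDeriv ν a b g t) t := by
  have hC := hasDerivAt_integral_mul (φ := fun s => cos (ν * s)) (by fun_prop) hg t
  have hS := hasDerivAt_integral_mul (φ := fun s => sin (ν * s)) (by fun_prop) hg t
  have h := (((hasDerivAt_cos_mul ν t).const_mul a).add ((hasDerivAt_sin_mul ν t).const_mul b)).add
    ((((hasDerivAt_sin_mul ν t).mul hC).sub ((hasDerivAt_cos_mul ν t).mul hS)).div_const ν)
  refine h.congr_deriv ?_
  simp only [oscSolDeriv]
  field_simp
  ring

theorem hasDerivAt_oscSolDeriv (hν : ν ≠ 0) (hg : Continuous g) (t : ℝ) :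
    HasDerivAt (oscSolDeriv ν a b g) (g t - ν ^ 2 * oscSol ν a b g t) t := by
  have hC := hasDerivAt_integral_mul (φ := fun s => cos (ν * s)) (by fun_prop) hg t
  have hS := hasDerivAt_integral_mul (φ := fun s => sin (ν * s)) (by fun_prop) hg t
  have h := ((((hasDerivAt_cos_mul ν t).const_mul b).sub
    ((hasDerivAt_sin_mul ν t).const_mul a)).const_mul ν).add
    (((hasDerivAt_cos_mul ν t).mul hC).add ((hasDerivAt_sin_mul ν t).mul hS))
  refine h.congr_deriv ?_
  simp only [oscSol]
  field_simp
  linear_combination g t * sin_sq_add_cos_sq (ν * t)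

@[fun_prop]
theorem continuous_oscSol (hg : Continuous g) : Continuous (oscSol ν a b g) := by
  unfold oscSol; fun_prop

theorem contDiff_oscSol (hν : ν ≠ 0) (hg : Continuous g) : ContDiff ℝ 2 (oscSol ν a b g) :=
  contDiff_two_of_hasDerivAt (hasDerivAt_oscSol hν hg) (hasDerivAt_oscSolDeriv hν hg) (by fun_prop)

theorem deriv_deriv_oscSol_add (hν : ν ≠ 0) (hg : Continuous g) (t : ℝ) :
    deriv (deriv (oscSol ν a b g)) t + ν ^ 2 * oscSol ν a b g t = g t := by
  rw [funext fun t => (hasDerivAt_oscSol (a := a) (b := b) hν hg t).deriv,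
    (hasDerivAt_oscSolDeriv hν hg t).deriv]
  ring

@[simp]
theorem oscSol_zero : oscSol ν a b g 0 = a := by
  simp [oscSol]

theorem oscSol_pi (hs : sin (ν * π) = 0) (hc : cos (ν * π) = 1) :
    oscSol ν a b g π = a - (∫ s in 0..π, sin (ν * s) * g s) / ν := by
  simp only [oscSol, hs, hc]
  ring

@[simp]
theorem oscSol_const_zero (t : ℝ) :
    oscSol ν a b (fun _ => 0) t = a * cos (ν * t) + b * sin (ν * t) := by
  simp [oscSol]

theorem abs_oscSol_sub_oscSol_le (hν : 0 < ν) {a' b' T M : ℝ} {g' : ℝ → ℝ} (hg : Continuous g)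
    (hg' : Continuous g') {t : ℝ} (ht : t ∈ Icc 0 T) (hM : ∀ s ∈ Icc 0 T, |g s - g' s| ≤ M) :
    |oscSol ν a b g t - oscSol ν a' b' g' t| ≤ |a - a'| + |b - b'| + 2 * T * M / ν := by
  have hM' : ∀ s ∈ Icc 0 t, |g s - g' s| ≤ M := fun s hs => hM s ⟨hs.1, hs.2.trans ht.2⟩
  have hM0 : 0 ≤ M := (abs_nonneg _).trans (hM 0 ⟨le_rfl, ht.1.trans ht.2⟩)
  have hC := abs_integral_mul_sub_integral_mul_le (φ := fun s => cos (ν * s)) (by fun_prop)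
    (fun s => abs_cos_le_one (ν * s)) hg hg' ht.1 hM'
  have hS := abs_integral_mul_sub_integral_mul_le (φ := fun s => sin (ν * s)) (by fun_prop)
    (fun s => abs_sin_le_one (ν * s)) hg hg' ht.1 hM'
  set C := (∫ s in 0..t, cos (ν * s) * g s) - ∫ s in 0..t, cos (ν * s) * g' s
  set S := (∫ s in 0..t, sin (ν * s) * g s) - ∫ s in 0..t, sin (ν * s) * g' s
  have hsplit : oscSol ν a b g t - oscSol ν a' b' g' t =
      (a - a') * cos (ν * t) + (b - b') * sin (ν * t) +
        (sin (ν * t) * C - cos (ν * t) * S) / ν := by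
    simp only [oscSol, C, S]
    ring
  have hforced : |(sin (ν * t) * C - cos (ν * t) * S) / ν| ≤ 2 * T * M / ν := by
    rw [abs_div, abs_of_pos hν]
    gcongr
    calc |sin (ν * t) * C - cos (ν * t) * S| ≤ |sin (ν * t)| * |C| + |cos (ν * t)| * |S| := by
          rw [← abs_mul, ← abs_mul]; exact abs_sub _ _
      _ ≤ 1 * (M * t) + 1 * (M * t) := by
          gcongr
          exacts [abs_sin_le_one _, abs_cos_le_one _]
      _ ≤ 2 * T * M := by nlinarith [ht.2]
  rw [hsplit]
  refine (abs_add_three _ _ _).trans (add_le_add (add_le_add ?_ ?_) hforced)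
  · rw [abs_mul]; exact mul_le_of_le_one_right (abs_nonneg _) (abs_cos_le_one _)
  · rw [abs_mul]; exact mul_le_of_le_one_right (abs_nonneg _) (abs_sin_le_one _)

end Oscillator

def homSol (ν b t : ℝ) : ℝ := cos (ν * t) + b * sin (ν * t)

theorem homSol_slope {ν t₁ : ℝ} (h : sin (ν * t₁) ≠ 0) (y : ℝ) :
    homSol ν ((y - cos (ν * t₁)) / sin (ν * t₁)) t₁ = y := by
  simp only [homSol]
  field_simp
  ring

theorem abs_homSol_le (ν b t : ℝ) : |homSol ν b t| ≤ 1 + |b| := by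
  refine (abs_add_le _ _).trans (add_le_add (abs_cos_le_one _) ?_)
  rw [abs_mul]
  exact mul_le_of_le_one_right (abs_nonneg _) (abs_sin_le_one _)

/-- The solvability condition at resonance: the primitive of the integrand is a polynomial in
`cos (ν s)` and `sin (ν s)`, and these take the same values at `s = 0` and `s = π`. -/
theorem integral_sin_mul_homSol_sq {ν : ℝ} (hν : ν ≠ 0) (hs : sin (ν * π) = 0)
    (hc : cos (ν * π) = 1) (b : ℝ) :
    ∫ s in 0..π, sin (ν * s) * homSol ν b s ^ 2 = 0 := by
  let P : ℝ → ℝ := fun s =>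
    (-cos (ν * s) ^ 3 + 2 * b * sin (ν * s) ^ 3 + b ^ 2 * (cos (ν * s) ^ 3 - 3 * cos (ν * s))) /
      (3 * ν)
  have hP : ∀ s, HasDerivAt P (sin (ν * s) * homSol ν b s ^ 2) s := fun s => by
    have hc := hasDerivAt_cos_mul ν s
    have hs := hasDerivAt_sin_mul ν s
    refine ((((hc.pow 3).neg.add ((hs.pow 3).const_mul (2 * b))).add
      (((hc.pow 3).sub (hc.const_mul 3)).const_mul (b ^ 2))).div_const (3 * ν)).congr_deriv ?_
    simp only [homSol]
    field_simp
    linear_combination (-3 * b ^ 2 * sin (ν * s)) * sin_sq_add_cos_sq (ν * s)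
  have hcont : Continuous fun s => sin (ν * s) * homSol ν b s ^ 2 := by unfold homSol; fun_prop
  rw [integral_eq_sub_of_hasDerivAt (fun s _ => hP s) (hcont.intervalIntegrable _ _)]
  simp [P, hs, hc]

section Truncation

def clip (R x : ℝ) : ℝ := max (-R) (min R x)

theorem lipschitzWith_clip (R : ℝ) : LipschitzWith 1 (clip R) :=
  (LipschitzWith.id.const_min R).const_max (-R)

theorem abs_clip_le {R : ℝ} (hR : 0 ≤ R) (x : ℝ) : |clip R x| ≤ R :=
  abs_le.2 ⟨le_max_left _ _, max_le (by linarith) (min_le_left _ _)⟩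

theorem clip_of_abs_le {R x : ℝ} (h : |x| ≤ R) : clip R x = x := by
  rw [clip, min_eq_right (abs_le.1 h).2, max_eq_right (abs_le.1 h).1]

theorem abs_clip_sub_clip_le (R x y : ℝ) : |clip R x - clip R y| ≤ |x - y| := by
  simpa [Real.dist_eq] using (lipschitzWith_clip R).dist_le_mul x y

/-- Clipping to `[-R, R]` makes the nonlinearities globally Lipschitz, so that the fixed-point map
below is a contraction on the whole space. -/
def truncExt (R : ℝ) (V : C(Icc 0 π, ℝ)) (s : ℝ) : ℝ := clip R (IccExtend pi_nonneg V s)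

variable {R : ℝ}

theorem continuous_truncExt_uncurry (R : ℝ) :
    Continuous fun p : C(Icc 0 π, ℝ) × ℝ => truncExt R p.1 p.2 :=
  (lipschitzWith_clip R).continuous.comp <|
    Continuous.IccExtend (f := fun p : C(Icc 0 π, ℝ) × ℝ => p.1) (by fun_prop) continuous_snd

@[fun_prop]
theorem continuous_truncExt (R : ℝ) (V : C(Icc 0 π, ℝ)) : Continuous (truncExt R V) :=
  (continuous_truncExt_uncurry R).comp (Continuous.prodMk_right V)

theorem abs_truncExt_le (hR : 0 ≤ R) (V : C(Icc 0 π, ℝ)) (s : ℝ) : |truncExt R V s| ≤ R :=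
  abs_clip_le hR _

theorem abs_truncExt_sub_le (V W : C(Icc 0 π, ℝ)) (s : ℝ) :
    |truncExt R V s - truncExt R W s| ≤ dist V W :=
  (abs_clip_sub_clip_le R _ _).trans <| by
    rw [← Real.dist_eq]; exact ContinuousMap.dist_apply_le_dist _

theorem truncExt_of_mem {V : C(Icc 0 π, ℝ)} {s : ℝ} (hs : s ∈ Icc 0 π) :
    truncExt R V s = clip R (V ⟨s, hs⟩) := by
  rw [truncExt, IccExtend_of_mem _ _ hs]

theorem abs_truncExt_pow_sub_le (hR : 0 ≤ R) (n : ℕ) (V W : C(Icc 0 π, ℝ)) (s : ℝ) :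
    |truncExt R V s ^ n - truncExt R W s ^ n| ≤ n * R ^ (n - 1) * dist V W :=
  (abs_pow_sub_pow_le_of_abs_le (abs_truncExt_le hR V s) (abs_truncExt_le hR W s) n).trans <| by
    gcongr; exact abs_truncExt_sub_le V W s

end Truncation

section Operator

variable (ν : ℝ) (m : ℕ) (t₁ ε R : ℝ)

/-- Fixed points of `solMap b` solve the problem with the truncated nonlinearity and with the
condition at `π` replaced by `v' 0 = ν b`; the condition at `π` becomes `residual K V = 0`
(`solOp_pi`). -/
def solOp (b : ℝ) (V : C(Icc 0 π, ℝ)) : ℝ → ℝ :=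
  oscSol ν (1 + ε * truncExt R V t₁ ^ m) b fun s => ε * truncExt R V s ^ 2

def solMap (b : ℝ) (V : C(Icc 0 π, ℝ)) : C(Icc 0 π, ℝ) :=
  ⟨fun t => solOp ν m t₁ ε R b V t, by unfold solOp; fun_prop⟩

def residual (K : ℝ) (V : C(Icc 0 π, ℝ)) : ℝ :=
  truncExt R V t₁ ^ m - K - (∫ s in 0..π, sin (ν * s) * truncExt R V s ^ 2) / ν

@[simp]
theorem solMap_apply (b : ℝ) (V : C(Icc 0 π, ℝ)) (t : Icc 0 π) :
    solMap ν m t₁ ε R b V t = solOp ν m t₁ ε R b V t := rfl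

variable {ν m t₁ ε R}

theorem solOp_pi (hs : sin (ν * π) = 0) (hc : cos (ν * π) = 1) (K b : ℝ) (V : C(Icc 0 π, ℝ)) :
    solOp ν m t₁ ε R b V π = 1 + ε * K + ε * residual ν m t₁ R K V := by
  simp only [solOp, residual, oscSol_pi hs hc, mul_left_comm (sin _) ε, integral_const_mul]
  ring

theorem dist_solMap_le (hν : 0 < ν) (hR : 0 ≤ R) (b : ℝ) (V W : C(Icc 0 π, ℝ)) :
    dist (solMap ν m t₁ ε R b V) (solMap ν m t₁ ε R b W) ≤
      |ε| * (m * R ^ (m - 1) + 4 * π * R / ν) * dist V W := by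
  refine (ContinuousMap.dist_le (by positivity)).2 fun x => ?_
  have hg : ∀ s ∈ Icc 0 π, |ε * truncExt R V s ^ 2 - ε * truncExt R W s ^ 2| ≤
      |ε| * (2 * R * dist V W) := fun s _ => by
    simpa [← mul_sub, abs_mul] using
      mul_le_mul_of_nonneg_left (abs_truncExt_pow_sub_le hR 2 V W s) (abs_nonneg ε)
  have ha : |(1 + ε * truncExt R V t₁ ^ m) - (1 + ε * truncExt R W t₁ ^ m)| ≤
      |ε| * (m * R ^ (m - 1) * dist V W) := by
    simpa [← mul_sub, abs_mul] using
      mul_le_mul_of_nonneg_left (abs_truncExt_pow_sub_le hR m V W t₁) (abs_nonneg ε)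
  calc dist (solMap ν m t₁ ε R b V x) (solMap ν m t₁ ε R b W x)
      ≤ |ε| * (m * R ^ (m - 1) * dist V W) + |b - b| + 2 * π * (|ε| * (2 * R * dist V W)) / ν := by
        rw [Real.dist_eq]
        exact (abs_oscSol_sub_oscSol_le hν (by fun_prop) (by fun_prop) x.2 hg).trans (by gcongr)
    _ = |ε| * (m * R ^ (m - 1) + 4 * π * R / ν) * dist V W := by
        rw [sub_self, abs_zero]; ring

theorem abs_solMap_sub_homSol_le (hν : 0 < ν) (hR : 0 ≤ R) (b : ℝ) (V : C(Icc 0 π, ℝ))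
    (x : Icc 0 π) :
    |solMap ν m t₁ ε R b V x - homSol ν b x| ≤ |ε| * (R ^ m + 2 * π * R ^ 2 / ν) := by
  have hg : ∀ s ∈ Icc 0 π, |ε * truncExt R V s ^ 2 - 0| ≤ |ε| * R ^ 2 := fun s _ => by
    rw [sub_zero, abs_mul, abs_pow]
    gcongr
    exact abs_truncExt_le hR V s
  have h := abs_oscSol_sub_oscSol_le (a := 1 + ε * truncExt R V t₁ ^ m) (b := b) (a' := 1) (b' := b)
    hν (by fun_prop) continuous_const x.2 hg
  rw [oscSol_const_zero, one_mul] at h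
  refine h.trans ?_
  rw [add_sub_cancel_left, sub_self, abs_zero, add_zero, abs_mul, abs_pow]
  have hpow : |truncExt R V t₁| ^ m ≤ R ^ m := by gcongr; exact abs_truncExt_le hR V t₁
  calc |ε| * |truncExt R V t₁| ^ m + 2 * π * (|ε| * R ^ 2) / ν
      ≤ |ε| * R ^ m + 2 * π * (|ε| * R ^ 2) / ν := by gcongr
    _ = |ε| * (R ^ m + 2 * π * R ^ 2 / ν) := by ring

theorem lipschitzWith_solMap_slope (hν : 0 < ν) (V : C(Icc 0 π, ℝ)) :
    LipschitzWith 1 fun b => solMap ν m t₁ ε R b V := by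
  refine LipschitzWith.of_dist_le_mul fun b b' => ?_
  refine (ContinuousMap.dist_le (by positivity)).2 fun x => ?_
  have h := abs_oscSol_sub_oscSol_le (a := 1 + ε * truncExt R V t₁ ^ m)
    (a' := 1 + ε * truncExt R V t₁ ^ m) (b := b) (b' := b') (g := fun s => ε * truncExt R V s ^ 2)
    (g' := fun s => ε * truncExt R V s ^ 2) (M := 0) hν (by fun_prop) (by fun_prop) x.2
    fun s _ => by simp
  simpa [Real.dist_eq, solOp] using h

theorem continuous_residual (K : ℝ) : Continuous (residual ν m t₁ R K) := by
  have hint : Continuous fun V : C(Icc 0 π, ℝ) => ∫ s in 0..π, sin (ν * s) * truncExt R V s ^ 2 :=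
    continuous_parametric_intervalIntegral_of_continuous' (by
      have := continuous_truncExt_uncurry R; fun_prop) 0 π
  have ht₁ : Continuous fun V : C(Icc 0 π, ℝ) => truncExt R V t₁ :=
    (continuous_truncExt_uncurry R).comp (Continuous.prodMk_left t₁)
  unfold residual
  fun_prop

theorem abs_residual_sub_le (hν : 0 < ν) (hs : sin (ν * π) = 0) (hc : cos (ν * π) = 1)
    (ht₁ : t₁ ∈ Icc 0 π) (hR : 0 ≤ R) {b d : ℝ} (hw : ∀ t ∈ Icc 0 π, |homSol ν b t| ≤ R)
    {V : C(Icc 0 π, ℝ)} (hV : ∀ x, |V x - homSol ν b x| ≤ d) (K : ℝ) :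
    |residual ν m t₁ R K V - (homSol ν b t₁ ^ m - K)| ≤ (m * R ^ (m - 1) + 2 * π * R / ν) * d := by
  have hclose : ∀ s ∈ Icc 0 π, |truncExt R V s - homSol ν b s| ≤ d := fun s hs => by
    rw [truncExt_of_mem hs, ← clip_of_abs_le (hw s hs)]
    exact (abs_clip_sub_clip_le R _ _).trans (hV ⟨s, hs⟩)
  have hpow : ∀ n : ℕ, ∀ s ∈ Icc 0 π,
      |truncExt R V s ^ n - homSol ν b s ^ n| ≤ n * R ^ (n - 1) * d :=
    fun n s hs => (abs_pow_sub_pow_le_of_abs_le (abs_truncExt_le hR V s) (hw s hs) n).trans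
      (by gcongr; exact hclose s hs)
  have hint := abs_integral_mul_sub_integral_mul_le (φ := fun s => sin (ν * s)) (by fun_prop)
    (fun s => abs_sin_le_one _) (by fun_prop : Continuous fun s => truncExt R V s ^ 2)
    (by unfold homSol; fun_prop : Continuous fun s => homSol ν b s ^ 2) (M := 2 * R * d) pi_nonneg
    fun s hs => (hpow 2 s hs).trans_eq (by norm_num)
  rw [integral_sin_mul_homSol_sq hν.ne' hs hc, sub_zero] at hint
  have hsplit : residual ν m t₁ R K V - (homSol ν b t₁ ^ m - K) =
      (truncExt R V t₁ ^ m - homSol ν b t₁ ^ m) -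
        (∫ s in 0..π, sin (ν * s) * truncExt R V s ^ 2) / ν := by
    rw [residual]; ring
  rw [hsplit]
  refine (abs_sub _ _).trans ?_
  rw [abs_div, abs_of_pos hν]
  calc |truncExt R V t₁ ^ m - homSol ν b t₁ ^ m| +
        |∫ s in 0..π, sin (ν * s) * truncExt R V s ^ 2| / ν
      ≤ m * R ^ (m - 1) * d + 2 * R * d * π / ν := by gcongr; exact hpow m t₁ ht₁
    _ = (m * R ^ (m - 1) + 2 * π * R / ν) * d := by ring

theorem exists_continuous_fixedPoint (hν : 0 < ν) (hR : 0 ≤ R)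
    (hε : |ε| * (m * R ^ (m - 1) + 4 * π * R / ν) ≤ 1 / 2) :
    ∃ V : ℝ → C(Icc 0 π, ℝ), Continuous V ∧ ∀ b, solMap ν m t₁ ε R b (V b) = V b := by
  have hcontr : ∀ b, ContractingWith (1 / 2) (solMap ν m t₁ ε R b) := fun b =>
    ⟨by rw [← NNReal.coe_lt_coe]; norm_num, LipschitzWith.of_dist_le_mul fun V W =>
      (dist_solMap_le hν hR b V W).trans (by push_cast; gcongr)⟩
  exact ⟨fun b => (hcontr b).fixedPoint, continuous_fixedPoint hcontr fun V =>
    (lipschitzWith_solMap_slope hν V).continuous, fun b => (hcontr b).fixedPoint_isFixedPt⟩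

theorem solution_of_fixedPoint (hν : ν ≠ 0) (hs : sin (ν * π) = 0) (hc : cos (ν * π) = 1)
    (ht₁ : t₁ ∈ Icc 0 π) {K b : ℝ} {V : C(Icc 0 π, ℝ)} (hfix : solMap ν m t₁ ε R b V = V)
    (hV : ∀ x, |V x| ≤ R) (hres : residual ν m t₁ R K V = 0) :
    ContDiff ℝ 2 (solOp ν m t₁ ε R b V) ∧
      (∀ t ∈ Icc 0 π, deriv (deriv (solOp ν m t₁ ε R b V)) t + ν ^ 2 * solOp ν m t₁ ε R b V t =
        ε * solOp ν m t₁ ε R b V t ^ 2) ∧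
      solOp ν m t₁ ε R b V 0 = 1 + ε * solOp ν m t₁ ε R b V t₁ ^ m ∧
      solOp ν m t₁ ε R b V π = 1 + ε * K := by
  have htrunc : ∀ s ∈ Icc 0 π, truncExt R V s = solOp ν m t₁ ε R b V s := fun s hs => by
    rw [truncExt_of_mem hs, clip_of_abs_le (hV _)]
    exact (DFunLike.congr_fun hfix ⟨s, hs⟩).symm
  have hg : Continuous fun s => ε * truncExt R V s ^ 2 := by fun_prop
  refine ⟨contDiff_oscSol hν hg, fun t ht => ?_, ?_, ?_⟩
  · have h := deriv_deriv_oscSol_add (a := 1 + ε * truncExt R V t₁ ^ m) (b := b) hν hg t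
    rwa [htrunc t ht] at h
  · rw [← htrunc t₁ ht₁]
    exact oscSol_zero
  · rw [solOp_pi hs hc, hres, mul_zero, add_zero]

theorem fixedPoint_near_homSol (hν : 0 < ν) (hs : sin (ν * π) = 0) (hc : cos (ν * π) = 1)
    (ht₁ : t₁ ∈ Icc 0 π) {b : ℝ} (hb : |b| + 2 ≤ R) {V : C(Icc 0 π, ℝ)}
    (hfix : solMap ν m t₁ ε R b V = V) (hε : |ε| * (R ^ m + 2 * π * R ^ 2 / ν) ≤ 1) (K : ℝ) :
    (∀ x, |V x| ≤ R) ∧ |residual ν m t₁ R K V - (homSol ν b t₁ ^ m - K)| ≤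
      |ε| * ((m * R ^ (m - 1) + 2 * π * R / ν) * (R ^ m + 2 * π * R ^ 2 / ν)) := by
  have hR : 0 ≤ R := by linarith [abs_nonneg b]
  have hw : ∀ t, |homSol ν b t| + 1 ≤ R := fun t => by linarith [abs_homSol_le ν b t]
  have hV : ∀ x, |V x - homSol ν b x| ≤ |ε| * (R ^ m + 2 * π * R ^ 2 / ν) := fun x => by
    rw [← hfix]; exact abs_solMap_sub_homSol_le hν hR b V x
  refine ⟨fun x => ?_, ?_⟩
  · linarith [abs_sub_abs_le_abs_sub (V x) (homSol ν b x), hw x, hV x]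
  · refine (abs_residual_sub_le hν hs hc ht₁ hR (fun t _ => by linarith [hw t]) hV K).trans_eq ?_
    ring

end Operator

theorem eventually_abs_mul_lt (C : ℝ) {a : ℝ} (ha : 0 < a) : ∀ᶠ ε in 𝓝 (0 : ℝ), |ε| * C < a :=
  ((continuous_abs.mul continuous_const).tendsto 0).eventually (gt_mem_nhds (by simpa using ha))

theorem eventually_exists_solution {ν t₁ K : ℝ} {m : ℕ} (hν : 0 < ν) (hs : sin (ν * π) = 0)
    (hc : cos (ν * π) = 1) (hm : m ≠ 0) (hK : 0 < K) (ht₁ : t₁ ∈ Icc 0 π)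
    (hs₁ : sin (ν * t₁) ≠ 0) :
    ∀ᶠ ε in 𝓝 0, ∃ v : ℝ → ℝ, ContDiff ℝ 2 v ∧
      (∀ t ∈ Icc 0 π, deriv (deriv v) t + ν ^ 2 * v t = ε * v t ^ 2) ∧
      v 0 = 1 + ε * v t₁ ^ m ∧ v π = 1 + ε * K := by
  obtain ⟨c, hcm⟩ : ∃ c : ℝ, c ^ m = K + 1 := ⟨_, rpow_inv_natCast_pow (by linarith) hm⟩
  set slope := fun y => (y - cos (ν * t₁)) / sin (ν * t₁)
  set R := max |slope 0| |slope c| + 2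
  have hR : 0 ≤ R := by positivity
  filter_upwards [eventually_abs_mul_lt (m * R ^ (m - 1) + 4 * π * R / ν) one_half_pos,
    eventually_abs_mul_lt (R ^ m + 2 * π * R ^ 2 / ν) one_pos,
    eventually_abs_mul_lt ((m * R ^ (m - 1) + 2 * π * R / ν) * (R ^ m + 2 * π * R ^ 2 / ν))
      (lt_min hK one_pos)] with ε hL hC hE
  obtain ⟨V, hVc, hfix⟩ := exists_continuous_fixedPoint (t₁ := t₁) hν hR hL.le
  have hnear := fun b (hb : |b| ≤ max |slope 0| |slope c|) =>
    fixedPoint_near_homSol hν hs hc ht₁ (by linarith) (hfix b) hC.le K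
  obtain ⟨-, h₀⟩ := hnear (slope 0) (le_max_left _ _)
  obtain ⟨-, h₁⟩ := hnear (slope c) (le_max_right _ _)
  rw [homSol_slope hs₁, zero_pow hm] at h₀
  rw [homSol_slope hs₁, hcm] at h₁
  have hsign : 0 ∈ uIcc (residual ν m t₁ R K (V (slope 0))) (residual ν m t₁ R K (V (slope c))) :=
    mem_uIcc.2 <| Or.inl ⟨by linarith [abs_le.1 h₀, min_le_left K 1],
      by linarith [abs_le.1 h₁, min_le_right K 1]⟩
  obtain ⟨b, hb, hres⟩ :=
    intermediate_value_uIcc ((continuous_residual K).comp hVc).continuousOn hsign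
  have hbR : |b| ≤ max |slope 0| |slope c| := by
    rcases mem_uIcc.1 hb with h | h
    · exact abs_le_max_abs_abs h.1 h.2
    · exact max_comm |slope 0| _ ▸ abs_le_max_abs_abs h.1 h.2
  exact ⟨_, solution_of_fixedPoint hν.ne' hs hc ht₁ (hfix b) (hnear b hbR).1 hres⟩

end ResonantBVP

end

/-- For even positive `n`, `m > 2`, `K > 0`, and `t₁ ∈ [0,π]` with
`sin(n t₁) ≠ 0`, the nonlocal boundary value problem `v'' + n² v = ε v²` on `(0,π)`,
`v(0) = 1 + ε v(t₁)^m`, `v(π) = 1 + ε K`, has a twice continuously differentiable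
solution for all sufficiently small `ε`. -/
theorem example_resonant_bvp_solvable (n m : ℕ) (hn : 0 < n) (hneven : Even n)
    (hm : 2 < m) (K : ℝ) (hK : 0 < K) (t₁ : ℝ) (ht₁ : t₁ ∈ Icc (0 : ℝ) π)
    (hsin : Real.sin (n * t₁) ≠ 0) :
    ∃ δ > 0, ∀ ε : ℝ, |ε| < δ →
      ∃ v : ℝ → ℝ,
        ContDiffOn ℝ 2 v (Icc 0 π) ∧
        (∀ t ∈ Ioo (0 : ℝ) π, deriv (deriv v) t + (n : ℝ) ^ 2 * v t = ε * (v t) ^ 2) ∧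
        v 0 = 1 + ε * (v t₁) ^ m ∧
        v π = 1 + ε * K := by
  have hs : sin (n * π) = 0 := sin_nat_mul_pi n
  have hc : cos (n * π) = 1 := by rw [cos_nat_mul_pi, hneven.neg_one_pow]
  obtain ⟨δ, hδ, hsol⟩ := Metric.eventually_nhds_iff.1 <|
    ResonantBVP.eventually_exists_solution (m := m) (Nat.cast_pos.2 hn) hs hc (by omega) hK ht₁ hsin
  refine ⟨δ, hδ, fun ε hε => ?_⟩
  obtain ⟨v, hv, hode, h₀, hπ⟩ := hsol (by rwa [Real.dist_0_eq_abs])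
  exact ⟨v, hv.contDiffOn, fun t ht => hode t (Ioo_subset_Icc_self ht), h₀, hπ⟩
end
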